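/- arXiv:2012.11598 — 7 statements merged into one kernel-verified Lean document; each statement's English description precedes it below -/
import Mathlib

section
/- For every f ∈ C(X_A,ℤ), the function ρ^f(x,τ) = f^{l_τ(x)}(x) − f^{k_τ(x)}(τ(x)) is well-defined (independent of the choice of orbit functions l_τ, k_τ) and satisfies the cocycle identity ρ^f(x, τ_2∘τ_1) = ρ^f(x,τ_1) + ρ^f(τ_1(x), τ_2) for all x ∈ X_A, τ_1, τ_2 ∈ Γ_A. -/
/-- The one-sided topological Markov shift space of a `{0,1}`-matrix `A`. -/
abbrev MarkovShift {N : ℕ} (A : Fin N → Fin N → Bool) : Type :=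
  { x : ℕ → Fin N // ∀ n, A (x n) (x (n + 1)) = true }

/-- The one-sided shift map `σ_A`. -/
def shiftMap {N : ℕ} (A : Fin N → Fin N → Bool) : MarkovShift A → MarkovShift A :=
  fun x => ⟨fun n => x.1 (n + 1), fun n => x.2 (n + 1)⟩

/-- Irreducibility of the matrix `A`: any index is connected to any other by an admissible path. -/
def IsIrreducibleMatrix {N : ℕ} (A : Fin N → Fin N → Bool) : Prop :=
  ∀ i j : Fin N, ∃ n : ℕ, 0 < n ∧ ∃ p : ℕ → Fin N, p 0 = i ∧ p n = j ∧
    ∀ m < n, A (p m) (p (m + 1)) = true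

/-- `A` is a permutation matrix. -/
def IsPermutationMatrix {N : ℕ} (A : Fin N → Fin N → Bool) : Prop :=
  (∀ i, ∃! j, A i j = true) ∧ (∀ j, ∃! i, A i j = true)
/-- An element of the continuous full group together with a choice of orbit functions. -/
structure FullGroupElt {X : Type*} [TopologicalSpace X] (σ : X → X) where
  toHomeo : X ≃ₜ X
  k : X → ℕ
  l : X → ℕ
  cont_k : Continuous k
  cont_l : Continuous l
  orbit : ∀ x, σ^[k x] (toHomeo x) = σ^[l x] x

/-- Partial sum `f^m(x) = ∑_{i=0}^{m-1} f(σ^i x)`. -/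
def pSum {X : Type*} (σ : X → X) (f : X → ℤ) (m : ℕ) (x : X) : ℤ :=
  ∑ i ∈ Finset.range m, f (σ^[i] x)

/-- The cocycle `ρ^f(x,τ) = f^{l_τ(x)}(x) − f^{k_τ(x)}(τ(x))`. -/
def rho {X : Type*} [TopologicalSpace X] (σ : X → X) (f : X → ℤ)
    (x : X) (τ : FullGroupElt σ) : ℤ :=
  pSum σ f (τ.l x) x - pSum σ f (τ.k x) (τ.toHomeo x)

/- ## Auxiliary development -/

namespace RhoAux

lemma pSum_add {X : Type*} (σ : X → X) (f : X → ℤ) (a b : ℕ) (x : X) :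
    pSum σ f (a + b) x = pSum σ f a x + pSum σ f b (σ^[a] x) := by
  unfold pSum
  rw [Finset.sum_range_add]
  congr 1
  refine Finset.sum_congr rfl fun i _ => ?_
  rw [Nat.add_comm a i, Function.iterate_add_apply]

lemma diff_le {X : Type*} (σ : X → X) (f : X → ℤ) {k l k' l' : ℕ} {y z : X}
    (h : σ^[l] y = σ^[k] z) (hsum : l + k' = l' + k) (hle : l ≤ l') :
    pSum σ f l y - pSum σ f k z = pSum σ f l' y - pSum σ f k' z := by
  obtain ⟨d, rfl⟩ := Nat.exists_eq_add_of_le hle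
  have hk : k' = k + d := by omega
  subst hk
  rw [pSum_add, pSum_add, h]; ring

lemma diff_eq_of_rel {X : Type*} (σ : X → X) (f : X → ℤ) {k l k' l' : ℕ} {y z : X}
    (h : σ^[l] y = σ^[k] z) (h' : σ^[l'] y = σ^[k'] z) (hsum : l + k' = l' + k) :
    pSum σ f l y - pSum σ f k z = pSum σ f l' y - pSum σ f k' z := by
  rcases le_total l l' with hle | hle
  · exact diff_le σ f h hsum hle
  · exact (diff_le σ f h' (by omega) hle).symm


variable {N : ℕ} {A : Fin N → Fin N → Bool}

lemma cont_shift : Continuous (shiftMap A) := by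
  apply Continuous.subtype_mk
  exact continuous_pi fun n => (continuous_apply (n + 1)).comp continuous_subtype_val

lemma shift_iter_val (a : ℕ) (y : MarkovShift A) (i : ℕ) :
    ((shiftMap A)^[a] y).1 i = y.1 (i + a) := by
  induction a generalizing y i with
  | zero => rfl
  | succ a ih =>
    rw [Function.iterate_succ_apply, ih]
    rfl

def AperSeq (w : ℕ → Fin N) : Prop :=
  ∀ p > 0, ∀ M, ∃ j, M ≤ j ∧ w (j + p) ≠ w j

lemma aper_iter {y : MarkovShift A} (h : AperSeq y.1) :
    ∀ a b : ℕ, (shiftMap A)^[a] y = (shiftMap A)^[b] y → a = b := by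
  have key : ∀ a b : ℕ, a < b → (shiftMap A)^[a] y = (shiftMap A)^[b] y → False := by
    intro a b hab heq
    obtain ⟨j, hj, hne⟩ := h (b - a) (by omega) a
    apply hne
    have := congrFun (congrArg Subtype.val heq) (j - a)
    rw [shift_iter_val, shift_iter_val] at this
    have e1 : j - a + a = j := by omega
    have e2 : j - a + b = j + (b - a) := by omega
    rw [e1, e2] at this
    exact this.symm
  intro a b heq
  rcases lt_trichotomy a b with h1 | h1 | h1
  · exact absurd heq (fun he => key a b h1 he)
  · exact h1
  · exact absurd heq.symm (fun he => key b a h1 he)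

lemma locConst {Z : Type*} [TopologicalSpace Z] [DiscreteTopology Z]
    (g : MarkovShift A → Z) (hg : Continuous g) (x : MarkovShift A) :
    ∃ n, ∀ y : MarkovShift A, (∀ j ≤ n, y.1 j = x.1 j) → g y = g x := by
  have hU : IsOpen (g ⁻¹' {g x}) := hg.isOpen_preimage _ (isOpen_discrete _)
  rw [isOpen_induced_iff] at hU
  obtain ⟨V, hV, hVeq⟩ := hU
  have hxV : x.1 ∈ V := by
    have : x ∈ Subtype.val ⁻¹' V := by rw [hVeq]; exact rfl
    exact this
  rw [isOpen_pi_iff] at hV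
  obtain ⟨I, u, hIu, hsub⟩ := hV x.1 hxV
  refine ⟨I.sup id, fun y hy => ?_⟩
  have : y.1 ∈ V := by
    apply hsub
    intro i hi
    rw [hy i (Finset.le_sup (f := id) hi)]
    exact (hIu i hi).2
  have : y ∈ Subtype.val ⁻¹' V := this
  rw [hVeq] at this
  exact this

lemma rho_locConst (f : MarkovShift A → ℤ) (hf : Continuous f)
    (τ : FullGroupElt (shiftMap A)) (x : MarkovShift A) :
    ∃ n, ∀ y : MarkovShift A, (∀ j ≤ n, y.1 j = x.1 j) →
      rho (shiftMap A) f y τ = rho (shiftMap A) f x τ := by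
  obtain ⟨n₀, h₀⟩ := locConst τ.k τ.cont_k x
  obtain ⟨n₁, h₁⟩ := locConst τ.l τ.cont_l x
  have hL : ∀ i : ℕ, ∃ n, ∀ y : MarkovShift A, (∀ j ≤ n, y.1 j = x.1 j) →
      f ((shiftMap A)^[i] y) = f ((shiftMap A)^[i] x) :=
    fun i => locConst (fun y => f ((shiftMap A)^[i] y))
      (hf.comp (cont_shift.iterate i)) x
  have hK : ∀ i : ℕ, ∃ n, ∀ y : MarkovShift A, (∀ j ≤ n, y.1 j = x.1 j) →
      f ((shiftMap A)^[i] (τ.toHomeo y)) = f ((shiftMap A)^[i] (τ.toHomeo x)) :=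
    fun i => locConst (fun y => f ((shiftMap A)^[i] (τ.toHomeo y)))
      ((hf.comp (cont_shift.iterate i)).comp τ.toHomeo.continuous) x
  choose nL hLs using hL
  choose nK hKs using hK
  set n : ℕ := n₀ ⊔ n₁ ⊔ (Finset.range (τ.l x)).sup nL ⊔ (Finset.range (τ.k x)).sup nK
    with hn
  refine ⟨n, fun y hy => ?_⟩
  have hyle : ∀ n', n' ≤ n → ∀ j ≤ n', y.1 j = x.1 j := fun n' hn' j hj =>
    hy j (le_trans hj hn')
  have hky : τ.k y = τ.k x := h₀ y (hyle n₀ (le_trans le_sup_left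
    (le_trans le_sup_left le_sup_left)))
  have hly : τ.l y = τ.l x := h₁ y (hyle n₁ (le_trans le_sup_right
    (le_trans le_sup_left le_sup_left)))
  unfold rho pSum
  rw [hky, hly]
  congr 1
  · refine Finset.sum_congr rfl fun i hi => ?_
    exact hLs i y (hyle _ (le_trans (Finset.le_sup hi) (le_trans le_sup_right le_sup_left)))
  · refine Finset.sum_congr rfl fun i hi => ?_
    exact hKs i y (hyle _ (le_trans (Finset.le_sup hi) le_sup_right))


lemma row_ex (hirr : IsIrreducibleMatrix A) (i : Fin N) : ∃ j, A i j = true := by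
  obtain ⟨n, hn, p, hp0, hpn, hpe⟩ := hirr i i
  exact ⟨p 1, by rw [← hp0]; exact hpe 0 hn⟩

lemma col_ex (hirr : IsIrreducibleMatrix A) (j : Fin N) : ∃ i, A i j = true := by
  obtain ⟨n, hn, p, hp0, hpn, hpe⟩ := hirr j j
  refine ⟨p (n - 1), ?_⟩
  have := hpe (n - 1) (by omega)
  rwa [show n - 1 + 1 = n by omega, hpn] at this

lemma exists_two (hirr : IsIrreducibleMatrix A) (hnp : ¬ IsPermutationMatrix A) :
    ∃ v a b : Fin N, a ≠ b ∧ A v a = true ∧ A v b = true := by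
  by_contra hcon
  push_neg at hcon
  apply hnp
  have rows : ∀ i, ∃! j, A i j = true := by
    intro i
    obtain ⟨j, hj⟩ := row_ex hirr i
    refine ⟨j, hj, fun j' hj' => ?_⟩
    by_contra hne
    exact absurd hj (hcon i j' j hne hj')
  refine ⟨rows, fun j => ?_⟩
  set g : Fin N → Fin N := fun i => (rows i).choose with hg
  have hgsp : ∀ i, A i (g i) = true := fun i => (rows i).choose_spec.1
  have hgeq : ∀ i j', A i j' = true → g i = j' := by
    intro i j' hj'
    exact ((rows i).choose_spec.2 j' hj').symm
  have hsurj : Function.Surjective g := by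
    intro j'
    obtain ⟨i, hi⟩ := col_ex hirr j'
    exact ⟨i, hgeq i j' hi⟩
  have hinj : Function.Injective g := Finite.injective_iff_surjective.mpr hsurj
  obtain ⟨i, hi⟩ := col_ex hirr j
  refine ⟨i, hi, fun i' hi' => ?_⟩
  exact hinj (by rw [hgeq i j hi, hgeq i' j hi'])

lemma exists_loop (hirr : IsIrreducibleMatrix A) {v a : Fin N} (hva : A v a = true) :
    ∃ L : ℕ, 2 ≤ L ∧ ∃ c : ℕ → Fin N, c 0 = v ∧ c 1 = a ∧
      (∀ i, A (c i) (c (i + 1)) = true) ∧ ∀ i, c (i + L) = c i := by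
  obtain ⟨m, hm, p, hp0, hpm, hpe⟩ := hirr a v
  refine ⟨m + 1, by omega, fun i => if i % (m + 1) = 0 then v else p (i % (m + 1) - 1),
    by simp, ?_, ?_, ?_⟩
  · have h1 : 1 % (m + 1) = 1 := Nat.mod_eq_of_lt (by omega)
    simp only [h1]
    simp [hp0]
  · intro i
    dsimp only
    have hrlt : i % (m + 1) < m + 1 := Nat.mod_lt _ (by omega)
    have e1 : (i + 1) % (m + 1) = (i % (m + 1) + 1) % (m + 1) := by
      rw [Nat.add_mod, Nat.mod_eq_of_lt (show 1 < m + 1 by omega)]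
    by_cases hc : i % (m + 1) + 1 = m + 1
    · have e2 : (i + 1) % (m + 1) = 0 := by rw [e1, hc, Nat.mod_self]
      have hrm : i % (m + 1) = m := by omega
      simp only [e2, hrm, if_pos rfl]
      rw [if_neg (by omega : ¬ m = 0)]
      have := hpe (m - 1) (by omega)
      rwa [show m - 1 + 1 = m by omega, hpm] at this
    · have e2 : (i + 1) % (m + 1) = i % (m + 1) + 1 := by
        rw [e1, Nat.mod_eq_of_lt (by omega)]
      rw [e2]
      by_cases hr0 : i % (m + 1) = 0
      · simp only [hr0, if_pos rfl]
        rw [if_neg (by omega : ¬ (0 + 1 = 0)), show 0 + 1 - 1 = 0 by omega, hp0]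
        exact hva
      · rw [if_neg hr0, if_neg (by omega : ¬ (i % (m + 1) + 1 = 0))]
        have := hpe (i % (m + 1) - 1) (by omega)
        rw [show i % (m + 1) - 1 + 1 = i % (m + 1) by omega] at this
        rw [show i % (m + 1) + 1 - 1 = i % (m + 1) by omega]
        exact this
  · intro i
    simp [Nat.add_mod_right]

lemma loop_mul_period {c : ℕ → Fin N} {La : ℕ} (hp : ∀ i, c (i + La) = c i) :
    ∀ t i, c (i + t * La) = c i := by
  intro t
  induction t with
  | zero => simp
  | succ t ih =>
    intro i
    have : i + (t + 1) * La = (i + t * La) + La := by ring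
    rw [this, hp, ih]

lemma exists_two_loops (hirr : IsIrreducibleMatrix A) (hnp : ¬ IsPermutationMatrix A) :
    ∃ (L : ℕ) (cA cB : ℕ → Fin N) (v : Fin N), 2 ≤ L ∧ cA 0 = v ∧ cB 0 = v ∧
      cA 1 ≠ cB 1 ∧ (∀ i, A (cA i) (cA (i + 1)) = true) ∧
      (∀ i, A (cB i) (cB (i + 1)) = true) ∧
      (∀ i, cA (i + L) = cA i) ∧ (∀ i, cB (i + L) = cB i) := by
  obtain ⟨v, a, b, hab, hva, hvb⟩ := exists_two hirr hnp
  obtain ⟨La, hLa, cA, hA0, hA1, heA, hpA⟩ := exists_loop hirr hva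
  obtain ⟨Lb, hLb, cB, hB0, hB1, heB, hpB⟩ := exists_loop hirr hvb
  refine ⟨La * Lb, cA, cB, v, ?_, hA0, hB0, by rw [hA1, hB1]; exact hab, heA, heB, ?_, ?_⟩
  · calc 2 ≤ 2 * 2 := by omega
      _ ≤ La * Lb := Nat.mul_le_mul hLa hLb
  · intro i
    rw [Nat.mul_comm La Lb]
    exact loop_mul_period hpA Lb i
  · intro i
    exact loop_mul_period hpB La i


lemma sqrt_prop (p T : ℕ) (hp : 0 < p) :
    ∃ t, T ≤ t ∧ (Nat.sqrt t * Nat.sqrt t = t) ∧ ¬ (Nat.sqrt (t + p) * Nat.sqrt (t + p) = t + p) := by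
  set k := T + p + 1 with hk
  refine ⟨k * k, ?_, by rw [Nat.sqrt_eq], ?_⟩
  · calc T ≤ k := by omega
      _ ≤ k * k := Nat.le_mul_of_pos_left k (by omega)
  · have hs : Nat.sqrt (k * k + p) = k := by
      apply le_antisymm
      · have : k * k + p < (k + 1) * (k + 1) := by nlinarith
        have h2 : Nat.sqrt (k * k + p) < k + 1 := by
          rw [Nat.sqrt_lt']
          calc k * k + p < (k + 1) * (k + 1) := this
            _ = (k + 1) ^ 2 := by ring
        omega
      · exact Nat.le_sqrt.mpr (by omega)
    rw [hs]
    omega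

lemma exists_aperiodic (hirr : IsIrreducibleMatrix A) (hnp : ¬ IsPermutationMatrix A)
    (x : MarkovShift A) (n : ℕ) :
    ∃ y : MarkovShift A, (∀ j ≤ n, y.1 j = x.1 j) ∧ AperSeq y.1 := by
  obtain ⟨L, cA, cB, v, hL2, hA0, hB0, hab, heA, heB, hpA, hpB⟩ := exists_two_loops hirr hnp
  obtain ⟨m, hm, q, hq0, hqm, hqe⟩ := hirr (x.1 n) v
  have hAL : cA L = v := by rw [← hA0, ← Nat.zero_add L]; exact hpA 0
  have hBL : cB L = v := by rw [← hB0, ← Nat.zero_add L]; exact hpB 0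
  set s : ℕ → Bool := fun t => decide (Nat.sqrt t * Nat.sqrt t = t) with hsdef
  set w : ℕ → Fin N := fun j =>
    if j ≤ n then x.1 j
    else if j ≤ n + m then q (j - n)
    else if s ((j - (n + m)) / L) then cA ((j - (n + m)) % L) else cB ((j - (n + m)) % L)
    with hwdef
  -- value at block positions
  have hblock : ∀ r : ℕ, 1 ≤ r →
      w (n + m + r) = (if s (r / L) then cA (r % L) else cB (r % L)) := by
    intro r hr
    have h1 : ¬ (n + m + r ≤ n) := by omega
    have h2 : ¬ (n + m + r ≤ n + m) := by omega
    rw [hwdef]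
    simp only [if_neg h1, if_neg h2]
    rw [show n + m + r - (n + m) = r by omega]
  have hedge : ∀ j, A (w j) (w (j + 1)) = true := by
    intro j
    rcases lt_trichotomy j n with hj | hj | hj
    · have h1 : j ≤ n := by omega
      have h2 : j + 1 ≤ n := by omega
      rw [hwdef]
      simp only [if_pos h1, if_pos h2]
      exact x.2 j
    · subst hj
      have h1 : ¬ (j + 1 ≤ j) := by omega
      have h2 : j + 1 ≤ j + m := by omega
      rw [hwdef]
      simp only [if_pos (le_refl j), if_neg h1, if_pos h2]
      rw [show j + 1 - j = 1 by omega, ← hq0]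
      exact hqe 0 hm
    · rcases lt_trichotomy j (n + m) with hj2 | hj2 | hj2
      · have h1 : ¬ (j ≤ n) := by omega
        have h2 : j ≤ n + m := by omega
        have h3 : ¬ (j + 1 ≤ n) := by omega
        have h4 : j + 1 ≤ n + m := by omega
        rw [hwdef]
        simp only [if_neg h1, if_pos h2, if_neg h3, if_pos h4]
        rw [show j + 1 - n = (j - n) + 1 by omega]
        exact hqe (j - n) (by omega)
      · subst hj2
        have h1 : ¬ (n + m ≤ n) := by omega
        have hwj : w (n + m) = v := by
          rw [hwdef]
          simp only [if_neg h1, if_pos (le_refl (n + m))]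
          rw [show n + m - n = m by omega, hqm]
        have hwj1 := hblock 1 (le_refl 1)
        rw [Nat.div_eq_of_lt (by omega), Nat.mod_eq_of_lt (by omega)] at hwj1
        rw [hwj, hwj1]
        by_cases hs0 : s 0
        · rw [if_pos hs0, ← hA0]; exact heA 0
        · rw [if_neg hs0, ← hB0]; exact heB 0
      · have hr1 : 1 ≤ j - (n + m) := by omega
        have hwj := hblock (j - (n + m)) hr1
        rw [show n + m + (j - (n + m)) = j by omega] at hwj
        have hwj1 := hblock (j - (n + m) + 1) (by omega)
        rw [show n + m + (j - (n + m) + 1) = j + 1 by omega] at hwj1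
        rw [hwj, hwj1]
        set r := j - (n + m) with hrdef
        have hdm := Nat.div_add_mod r L
        have hmlt : r % L < L := Nat.mod_lt _ (by omega)
        by_cases hco : r % L + 1 = L
        · have hmod : (r + 1) % L = 0 := by
            have hmul : L * (r / L + 1) = L * (r / L) + L := by ring
            have h' : r + 1 = L * (r / L + 1) := by omega
            rw [h', Nat.mul_mod_right]
          rw [hmod, hA0, hB0, ite_self]
          have hrL : r % L = L - 1 := by omega
          rw [hrL]
          by_cases hs : s (r / L)
          · rw [if_pos hs]
            have := heA (L - 1)
            rwa [show L - 1 + 1 = L by omega, hAL] at this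
          · rw [if_neg hs]
            have := heB (L - 1)
            rwa [show L - 1 + 1 = L by omega, hBL] at this
        · have hmod : (r + 1) % L = r % L + 1 := by
            have h' : r + 1 = L * (r / L) + (r % L + 1) := by omega
            rw [h', Nat.mul_add_mod, Nat.mod_eq_of_lt (by omega)]
          have hdiv : (r + 1) / L = r / L := by
            have h' : r + 1 = L * (r / L) + (r % L + 1) := by omega
            rw [h', Nat.mul_add_div (by omega : 0 < L),
              Nat.div_eq_of_lt (by omega : r % L + 1 < L)]
            omega
          rw [hmod, hdiv]
          by_cases hs : s (r / L)
          · rw [if_pos hs, if_pos hs]; exact heA (r % L)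
          · rw [if_neg hs, if_neg hs]; exact heB (r % L)
  refine ⟨⟨w, hedge⟩, fun j hj => ?_, ?_⟩
  · show w j = x.1 j
    rw [hwdef]
    simp only [if_pos hj]
  · show AperSeq w
    intro p hp M
    by_contra hcon
    push_neg at hcon
    have hper : ∀ c j, M ≤ j → w (j + c * p) = w j := by
      intro c
      induction c with
      | zero => simp
      | succ c ih =>
        intro j hj
        have e : j + (c + 1) * p = (j + c * p) + p := by ring
        rw [e, hcon (j + c * p) (by omega), ih j hj]
    obtain ⟨t, hT, hsq, hnsq⟩ := sqrt_prop p M hp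
    have hblockval : ∀ u : ℕ, w (n + m + (u * L + 1)) = if s u then cA 1 else cB 1 := by
      intro u
      rw [hblock (u * L + 1) (by omega)]
      have hdt : (u * L + 1) / L = u := by
        rw [Nat.mul_comm, Nat.mul_add_div (by omega : 0 < L),
          Nat.div_eq_of_lt (by omega : 1 < L)]
        omega
      have hmt : (u * L + 1) % L = 1 := by
        rw [Nat.mul_comm, Nat.mul_add_mod, Nat.mod_eq_of_lt (by omega)]
      rw [hdt, hmt]
    have htL : t ≤ t * L := Nat.le_mul_of_pos_right t (by omega)
    have heq : w (n + m + (t * L + 1) + L * p) = w (n + m + (t * L + 1)) :=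
      hper L (n + m + (t * L + 1)) (by omega)
    have hidx : n + m + (t * L + 1) + L * p = n + m + ((t + p) * L + 1) := by ring
    rw [hidx, hblockval (t + p), hblockval t] at heq
    have hst : s t = true := by rw [hsdef]; simp only [decide_eq_true_eq]; exact hsq
    have hstp : s (t + p) = false := by
      rw [hsdef]
      simp only [decide_eq_false_iff_not]
      exact hnsq
    rw [hst, hstp] at heq
    simp only [if_true, if_false] at heq
    exact hab heq.symm

end RhoAux

open RhoAux in
/-- `ρ^f` is independent of the choice of orbit functions, and satisfies the
one-cocycle identity. -/
theorem rho_wellDefined_and_cocycle {N : ℕ} (A : Fin N → Fin N → Bool)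
    (hirr : IsIrreducibleMatrix A) (hnp : ¬ IsPermutationMatrix A)
    (f : MarkovShift A → ℤ) (hf : Continuous f) :
    (∀ τ τ' : FullGroupElt (shiftMap A), τ.toHomeo = τ'.toHomeo →
      ∀ x, rho (shiftMap A) f x τ = rho (shiftMap A) f x τ') ∧
    (∀ τ₁ τ₂ τ₃ : FullGroupElt (shiftMap A),
      τ₃.toHomeo = τ₁.toHomeo.trans τ₂.toHomeo →
      ∀ x, rho (shiftMap A) f x τ₃ =
        rho (shiftMap A) f x τ₁ + rho (shiftMap A) f (τ₁.toHomeo x) τ₂) := by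
  have wd : ∀ τ τ' : FullGroupElt (shiftMap A), τ.toHomeo = τ'.toHomeo →
      ∀ x, rho (shiftMap A) f x τ = rho (shiftMap A) f x τ' := by
    intro τ τ' heq x
    obtain ⟨n₁, H1⟩ := rho_locConst f hf τ x
    obtain ⟨n₂, H2⟩ := rho_locConst f hf τ' x
    obtain ⟨y, hag, haper⟩ := exists_aperiodic hirr hnp x (n₁ ⊔ n₂)
    have hag1 : ∀ j ≤ n₁, y.1 j = x.1 j := fun j hj => hag j (le_trans hj le_sup_left)
    have hag2 : ∀ j ≤ n₂, y.1 j = x.1 j := fun j hj => hag j (le_trans hj le_sup_right)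
    rw [← H1 y hag1, ← H2 y hag2]
    have h1 := τ.orbit y
    rw [heq] at h1
    have h2 := τ'.orbit y
    have hsum : τ'.k y + τ.l y = τ.k y + τ'.l y := by
      apply aper_iter haper
      calc (shiftMap A)^[τ'.k y + τ.l y] y
          = (shiftMap A)^[τ'.k y] ((shiftMap A)^[τ.l y] y) :=
            Function.iterate_add_apply _ _ _ _
        _ = (shiftMap A)^[τ'.k y] ((shiftMap A)^[τ.k y] (τ'.toHomeo y)) := by rw [h1]
        _ = (shiftMap A)^[τ'.k y + τ.k y] (τ'.toHomeo y) :=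
            (Function.iterate_add_apply _ _ _ _).symm
        _ = (shiftMap A)^[τ.k y + τ'.k y] (τ'.toHomeo y) := by rw [Nat.add_comm]
        _ = (shiftMap A)^[τ.k y] ((shiftMap A)^[τ'.k y] (τ'.toHomeo y)) :=
            Function.iterate_add_apply _ _ _ _
        _ = (shiftMap A)^[τ.k y] ((shiftMap A)^[τ'.l y] y) := by rw [h2]
        _ = (shiftMap A)^[τ.k y + τ'.l y] y := (Function.iterate_add_apply _ _ _ _).symm
    unfold rho
    rw [heq]
    exact diff_eq_of_rel (shiftMap A) f h1.symm h2.symm (by omega)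
  refine ⟨wd, ?_⟩
  intro τ₁ τ₂ τ₃ heq x
  have contk : Continuous (fun z => τ₁.k z + τ₂.k (τ₁.toHomeo z)) := by
    exact Continuous.add τ₁.cont_k (τ₂.cont_k.comp τ₁.toHomeo.continuous)
  have contl : Continuous (fun z => τ₁.l z + τ₂.l (τ₁.toHomeo z)) := by
    exact Continuous.add τ₁.cont_l (τ₂.cont_l.comp τ₁.toHomeo.continuous)
  have orb : ∀ z, (shiftMap A)^[τ₁.k z + τ₂.k (τ₁.toHomeo z)]
      ((τ₁.toHomeo.trans τ₂.toHomeo) z) = (shiftMap A)^[τ₁.l z + τ₂.l (τ₁.toHomeo z)] z := by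
    intro z
    simp only [Homeomorph.trans_apply]
    calc (shiftMap A)^[τ₁.k z + τ₂.k (τ₁.toHomeo z)] (τ₂.toHomeo (τ₁.toHomeo z))
        = (shiftMap A)^[τ₁.k z] ((shiftMap A)^[τ₂.k (τ₁.toHomeo z)] (τ₂.toHomeo (τ₁.toHomeo z))) :=
          Function.iterate_add_apply _ _ _ _
      _ = (shiftMap A)^[τ₁.k z] ((shiftMap A)^[τ₂.l (τ₁.toHomeo z)] (τ₁.toHomeo z)) := by
          rw [τ₂.orbit]
      _ = (shiftMap A)^[τ₁.k z + τ₂.l (τ₁.toHomeo z)] (τ₁.toHomeo z) :=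
          (Function.iterate_add_apply _ _ _ _).symm
      _ = (shiftMap A)^[τ₂.l (τ₁.toHomeo z) + τ₁.k z] (τ₁.toHomeo z) := by rw [Nat.add_comm]
      _ = (shiftMap A)^[τ₂.l (τ₁.toHomeo z)] ((shiftMap A)^[τ₁.k z] (τ₁.toHomeo z)) :=
          Function.iterate_add_apply _ _ _ _
      _ = (shiftMap A)^[τ₂.l (τ₁.toHomeo z)] ((shiftMap A)^[τ₁.l z] z) := by rw [τ₁.orbit]
      _ = (shiftMap A)^[τ₂.l (τ₁.toHomeo z) + τ₁.l z] z :=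
          (Function.iterate_add_apply _ _ _ _).symm
      _ = (shiftMap A)^[τ₁.l z + τ₂.l (τ₁.toHomeo z)] z := by rw [Nat.add_comm]
  let τ₃' : FullGroupElt (shiftMap A) :=
    { toHomeo := τ₁.toHomeo.trans τ₂.toHomeo
      k := fun z => τ₁.k z + τ₂.k (τ₁.toHomeo z)
      l := fun z => τ₁.l z + τ₂.l (τ₁.toHomeo z)
      cont_k := contk
      cont_l := contl
      orbit := orb }
  have step1 : rho (shiftMap A) f x τ₃ = rho (shiftMap A) f x τ₃' := wd τ₃ τ₃' heq x
  rw [step1]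
  have hhom : τ₃'.toHomeo x = τ₂.toHomeo (τ₁.toHomeo x) := rfl
  have hk3 : τ₃'.k x = τ₁.k x + τ₂.k (τ₁.toHomeo x) := rfl
  have hl3 : τ₃'.l x = τ₁.l x + τ₂.l (τ₁.toHomeo x) := rfl
  unfold rho
  rw [hhom, hk3, hl3]
  have o1 : (shiftMap A)^[τ₁.k x] (τ₁.toHomeo x) = (shiftMap A)^[τ₁.l x] x := τ₁.orbit x
  have o2 : (shiftMap A)^[τ₂.k (τ₁.toHomeo x)] (τ₂.toHomeo (τ₁.toHomeo x))
      = (shiftMap A)^[τ₂.l (τ₁.toHomeo x)] (τ₁.toHomeo x) := τ₂.orbit (τ₁.toHomeo x)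
  have E1 : pSum (shiftMap A) f (τ₁.l x + τ₂.l (τ₁.toHomeo x)) x
      = pSum (shiftMap A) f (τ₁.l x) x
        + pSum (shiftMap A) f (τ₂.l (τ₁.toHomeo x)) ((shiftMap A)^[τ₁.k x] (τ₁.toHomeo x)) := by
    rw [pSum_add, o1]
  have E2 : pSum (shiftMap A) f (τ₁.k x + τ₂.k (τ₁.toHomeo x)) (τ₂.toHomeo (τ₁.toHomeo x))
      = pSum (shiftMap A) f (τ₂.k (τ₁.toHomeo x)) (τ₂.toHomeo (τ₁.toHomeo x))
        + pSum (shiftMap A) f (τ₁.k x) ((shiftMap A)^[τ₂.l (τ₁.toHomeo x)] (τ₁.toHomeo x)) := by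
    rw [Nat.add_comm, pSum_add, o2]
  have E3 : pSum (shiftMap A) f (τ₁.k x + τ₂.l (τ₁.toHomeo x)) (τ₁.toHomeo x)
      = pSum (shiftMap A) f (τ₁.k x) (τ₁.toHomeo x)
        + pSum (shiftMap A) f (τ₂.l (τ₁.toHomeo x)) ((shiftMap A)^[τ₁.k x] (τ₁.toHomeo x)) :=
    pSum_add _ f _ _ _
  have E4 : pSum (shiftMap A) f (τ₁.k x + τ₂.l (τ₁.toHomeo x)) (τ₁.toHomeo x)
      = pSum (shiftMap A) f (τ₂.l (τ₁.toHomeo x)) (τ₁.toHomeo x)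
        + pSum (shiftMap A) f (τ₁.k x) ((shiftMap A)^[τ₂.l (τ₁.toHomeo x)] (τ₁.toHomeo x)) := by
    rw [Nat.add_comm, pSum_add]
  linarith [E1, E2, E3, E4]
end

section
/- For f ∈ C(X_A,ℤ) and τ ∈ Γ_A, define Ψ_τ(f)(x) = f^{l_{τ,1}(x)}(τ(x)) − f^{k_{τ,1}(x)}(τ(σ_A(x))), where l_{τ,1}(x) = l_τ(σ_A(x)) + k_τ(x) + 1 and k_{τ,1}(x) = k_τ(σ_A(x)) + l_τ(x). Then ρ^f(x,τ) − ρ^f(σ_A(x),τ) = f(x) − Ψ_τ(f)(x) for all x ∈ X_A. -/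
/-- `Ψ_τ(f)(x) = f^{l_{τ,1}(x)}(τ(x)) − f^{k_{τ,1}(x)}(τ(σx))`. -/
def PsiTau {X : Type*} [TopologicalSpace X] (σ : X → X) (τ : FullGroupElt σ)
    (f : X → ℤ) (x : X) : ℤ :=
  pSum σ f (τ.l (σ x) + τ.k x + 1) (τ.toHomeo x) -
    pSum σ f (τ.k (σ x) + τ.l x) (τ.toHomeo (σ x))

/-- `ρ^f(x,τ) − ρ^f(σx,τ) = f(x) − Ψ_τ(f)(x)`. -/
theorem rho_shift_difference {X : Type*} [TopologicalSpace X] (σ : X → X)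
    (f : X → ℤ) (hf : Continuous f) (τ : FullGroupElt σ) :
    ∀ x : X, rho σ f x τ - rho σ f (σ x) τ = f x - PsiTau σ τ f x := by
  intro x
  have hadd : ∀ (a b : ℕ) (y : X), pSum σ f (a + b) y
      = pSum σ f a y + pSum σ f b (σ^[a] y) := by
    intro a b y
    unfold pSum
    rw [Finset.sum_range_add]
    congr 1
    apply Finset.sum_congr rfl
    intro i _
    rw [← Function.iterate_add_apply, Nat.add_comm]
  have hsucc : ∀ (m : ℕ) (y : X), pSum σ f (m + 1) y = f y + pSum σ f m (σ y) := by
    intro m y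
    unfold pSum
    rw [Finset.sum_range_succ']
    simp [Function.iterate_succ_apply, add_comm]
  set a := τ.l x
  set b := τ.k x
  set c := τ.l (σ x)
  set d := τ.k (σ x)
  have h1 : pSum σ f (c + b + 1) (τ.toHomeo x)
      = pSum σ f b (τ.toHomeo x) + pSum σ f (c + 1) (σ^[a] x) := by
    have := hadd b (c + 1) (τ.toHomeo x)
    rw [τ.orbit x] at this
    rw [show c + b + 1 = b + (c + 1) by ring] at *
    exact this
  have h2 : pSum σ f (d + a) (τ.toHomeo (σ x))
      = pSum σ f d (τ.toHomeo (σ x)) + pSum σ f a (σ^[c] (σ x)) := by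
    have := hadd d a (τ.toHomeo (σ x))
    rw [τ.orbit (σ x)] at this
    exact this
  have h3 : pSum σ f (a + c + 1) x = pSum σ f a x + pSum σ f (c + 1) (σ^[a] x) := by
    have := hadd a (c + 1) x
    rw [show a + c + 1 = a + (c + 1) by ring]
    exact this
  have h4 : pSum σ f (c + a) (σ x) = pSum σ f c (σ x) + pSum σ f a (σ^[c] (σ x)) :=
    hadd c a (σ x)
  have h5 : pSum σ f (a + c + 1) x = f x + pSum σ f (c + a) (σ x) := by
    have := hsucc (c + a) x
    rw [show a + c + 1 = c + a + 1 by ring]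
    exact this
  simp only [rho, PsiTau]
  linarith [h1, h2, h3, h4, h5]
end

section
/- For b ∈ C(X_A,ℤ) set 1_b = 1 − b + b∘σ_A ∈ C(X_A,ℤ). Then the coboundary subgroup Γ_A^b = {τ ∈ Γ_A : d_τ(x) = b(x) − b(τ(x)) for all x} coincides with the cocycle subgroup Γ_{A,1_b} = {τ : ρ^{1_b}(x,τ) = 0 for all x}. In particular Γ_A^b is a subgroup of Γ_A, and Γ_A^{m+b} = Γ_A^b for any integer m. -/
/-- Membership in the cocycle subgroup `Γ_{A,f}`. -/
def memCocycleSubgroup {X : Type*} [TopologicalSpace X] (σ : X → X) (f : X → ℤ)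
    (τ : Equiv.Perm X) : Prop :=
  Continuous τ ∧ Continuous τ.symm ∧
    ∃ k l : X → ℕ, Continuous k ∧ Continuous l ∧
      (∀ x, σ^[k x] (τ x) = σ^[l x] x) ∧
      ∀ x, pSum σ f (l x) x = pSum σ f (k x) (τ x)

/-- Membership in the coboundary subgroup `Γ_A^b`: `τ ∈ Γ_A` with
`d_τ(x) = b(x) − b(τ(x))` for all `x`. -/
def memCoboundarySubgroup {X : Type*} [TopologicalSpace X] (σ : X → X) (b : X → ℤ)
    (τ : Equiv.Perm X) : Prop :=
  Continuous τ ∧ Continuous τ.symm ∧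
    ∃ k l : X → ℕ, Continuous k ∧ Continuous l ∧
      (∀ x, σ^[k x] (τ x) = σ^[l x] x) ∧
      ∀ x, (l x : ℤ) - (k x : ℤ) = b x - b (τ x)

/-! `Γ_A^b` is a subgroup because `d_τ` is a cocycle and `x ↦ b x - b (τ x)` a coboundary;
it equals `Γ_{A,1_b}` because the partial sums of `1_b` telescope to `m - b x + b (σ^m x)`,
so on `σ^[k x] (τ x) = σ^[l x] x` the cocycle condition for `1_b` reads `d_τ x = b x - b (τ x)`. -/

section

variable {X : Type*}

theorem pSum_one_sub_add_comp (σ : X → X) (b : X → ℤ) (m : ℕ) (x : X) :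
    pSum σ (fun x => 1 - b x + b (σ x)) m x = m - b x + b (σ^[m] x) := by
  induction m with
  | zero => simp [pSum]
  | succ n ih =>
    unfold pSum at ih ⊢
    rw [Finset.sum_range_succ, ih, Function.iterate_succ_apply']
    push_cast
    ring

theorem Function.iterate_add_apply_eq_of_iterate_eq (f : X → X) {a b c d : ℕ} {y z w : X}
    (hyz : f^[a] y = f^[b] z) (hzw : f^[c] z = f^[d] w) :
    f^[c + a] y = f^[b + d] w := by
  rw [Function.iterate_add_apply, hyz, ← Function.iterate_add_apply, Nat.add_comm,
    Function.iterate_add_apply, hzw, ← Function.iterate_add_apply]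

variable [TopologicalSpace X] {σ : X → X} {b : X → ℤ}

theorem memCoboundarySubgroup_one : memCoboundarySubgroup σ b 1 :=
  ⟨continuous_id, continuous_id, fun _ => 0, fun _ => 0, continuous_const, continuous_const,
    fun _ => rfl, fun _ => by simp⟩

theorem memCoboundarySubgroup.mul {τ₁ τ₂ : Equiv.Perm X} (h₁ : memCoboundarySubgroup σ b τ₁)
    (h₂ : memCoboundarySubgroup σ b τ₂) : memCoboundarySubgroup σ b (τ₁ * τ₂) := by
  obtain ⟨hτ₁, hτ₁', k₁, l₁, hk₁, hl₁, orbit₁, cob₁⟩ := h₁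
  obtain ⟨hτ₂, hτ₂', k₂, l₂, hk₂, hl₂, orbit₂, cob₂⟩ := h₂
  refine ⟨hτ₁.comp hτ₂, hτ₂'.comp hτ₁', fun x => k₂ x + k₁ (τ₂ x), fun x => l₁ (τ₂ x) + l₂ x,
    hk₂.add (hk₁.comp hτ₂), (hl₁.comp hτ₂).add hl₂, fun x => ?_, fun x => ?_⟩
  · exact Function.iterate_add_apply_eq_of_iterate_eq σ (orbit₁ (τ₂ x)) (orbit₂ x)
  · have := cob₁ (τ₂ x)
    have := cob₂ x
    simp only [Equiv.Perm.mul_apply]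
    push_cast
    linarith

theorem memCoboundarySubgroup.inv {τ : Equiv.Perm X} (h : memCoboundarySubgroup σ b τ) :
    memCoboundarySubgroup σ b τ⁻¹ := by
  obtain ⟨hτ, hτ', k, l, hk, hl, orbit, cob⟩ := h
  refine ⟨hτ', hτ, fun x => l (τ.symm x), fun x => k (τ.symm x), hl.comp hτ', hk.comp hτ',
    fun x => ?_, fun x => ?_⟩
  · simpa using (orbit (τ.symm x)).symm
  · simpa using congrArg Neg.neg (cob (τ.symm x))

variable (σ b)

def coboundarySubgroup : Subgroup (Equiv.Perm X) where
  carrier := { τ | memCoboundarySubgroup σ b τ }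
  one_mem' := memCoboundarySubgroup_one
  mul_mem' := memCoboundarySubgroup.mul
  inv_mem' := memCoboundarySubgroup.inv

theorem memCoboundarySubgroup_iff_memCocycleSubgroup (τ : Equiv.Perm X) :
    memCoboundarySubgroup σ b τ ↔ memCocycleSubgroup σ (fun x => 1 - b x + b (σ x)) τ := by
  refine and_congr_right fun _ => and_congr_right fun _ => exists₂_congr fun k l =>
    and_congr_right fun _ => and_congr_right fun _ => and_congr_right fun orbit =>
    forall_congr' fun x => ?_
  rw [pSum_one_sub_add_comp, pSum_one_sub_add_comp, orbit x]
  constructor <;> intro h <;> linarith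

theorem memCoboundarySubgroup_const_add (m : ℤ) (τ : Equiv.Perm X) :
    memCoboundarySubgroup σ (fun x => m + b x) τ ↔ memCoboundarySubgroup σ b τ := by
  simp only [memCoboundarySubgroup, add_sub_add_left_eq_sub]

end

theorem coboundarySubgroup_eq_cocycleSubgroup_general {X : Type*} [TopologicalSpace X]
    (σ : X → X) (b : X → ℤ) :
    ({ τ | memCoboundarySubgroup σ b τ } =
      { τ | memCocycleSubgroup σ (fun x => 1 - b x + b (σ x)) τ }) ∧
    (∃ G : Subgroup (Equiv.Perm X), ↑G = { τ | memCoboundarySubgroup σ b τ }) ∧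
    (∀ m : ℤ, { τ | memCoboundarySubgroup σ (fun x => m + b x) τ } =
      { τ | memCoboundarySubgroup σ b τ }) :=
  ⟨Set.ext (memCoboundarySubgroup_iff_memCocycleSubgroup σ b), ⟨coboundarySubgroup σ b, rfl⟩,
    fun m => Set.ext (memCoboundarySubgroup_const_add σ b m)⟩

/-- with `1_b = 1 − b + b∘σ_A`, the coboundary subgroup `Γ_A^b` coincides
with the cocycle subgroup `Γ_{A,1_b}`; in particular it is a subgroup of `Γ_A`, and
`Γ_A^{m+b} = Γ_A^b` for every integer `m`. -/
theorem coboundarySubgroup_eq_cocycleSubgroup {X : Type*} [TopologicalSpace X]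
    (σ : X → X) (b : X → ℤ) (hb : Continuous b) :
    ({ τ | memCoboundarySubgroup σ b τ } =
      { τ | memCocycleSubgroup σ (fun x => 1 - b x + b (σ x)) τ }) ∧
    (∃ G : Subgroup (Equiv.Perm X), ↑G = { τ | memCoboundarySubgroup σ b τ }) ∧
    (∀ m : ℤ, { τ | memCoboundarySubgroup σ (fun x => m + b x) τ } =
      { τ | memCoboundarySubgroup σ b τ }) :=
  coboundarySubgroup_eq_cocycleSubgroup_general σ b
end

section
/- Let μ = ab be an admissible 2-block of X_A with a ≠ b, and define τ_μ : X_A → X_A by τ_μ(x) = σ_A(x) for x ∈ U_μ, τ_μ(x) = a·x for x ∈ U_b, and τ_μ(x) = x otherwise. Then τ_μ ∈ Γ_A, and with b_μ = l_{τ_μ} (equal to 1 on U_μ and 0 elsewhere) one has d_{τ_μ} = b_μ − b_μ∘τ_μ, so τ_μ ∈ Γ_A^{b_μ}. -/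
/-- for an admissible 2-block `μ = ab` with `a ≠ b`, the map `τ_μ` that
shifts on the cylinder `U_μ`, prepends `a` on `U_b`, and is the identity elsewhere,
belongs to the continuous full group `Γ_A`, with orbit functions `l = 1` on `U_μ`,
`0` elsewhere, and `k = 1` on `U_b`, `0` elsewhere; setting `b_μ = l_{τ_μ}` one has
`d_{τ_μ} = b_μ − b_μ∘τ_μ`, i.e. `τ_μ ∈ Γ_A^{b_μ}`. -/
theorem tauMu_mem_coboundarySubgroup {N : ℕ} (A : Fin N → Fin N → Bool)
    (hirr : IsIrreducibleMatrix A) (hnp : ¬ IsPermutationMatrix A)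
    (a b : Fin N) (hab : a ≠ b) (hadm : A a b = true)
    (t : MarkovShift A → MarkovShift A)
    (ht1 : ∀ x : MarkovShift A, x.1 0 = a → x.1 1 = b → t x = shiftMap A x)
    (ht2 : ∀ x : MarkovShift A, x.1 0 = b →
      (t x).1 0 = a ∧ ∀ n, (t x).1 (n + 1) = x.1 n)
    (ht3 : ∀ x : MarkovShift A, x.1 0 ≠ b → ¬(x.1 0 = a ∧ x.1 1 = b) → t x = x) :
    ∃ τ : FullGroupElt (shiftMap A),
      (∀ x, τ.toHomeo x = t x) ∧
      (∀ x, τ.l x = if x.1 0 = a ∧ x.1 1 = b then 1 else 0) ∧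
      (∀ x, τ.k x = if x.1 0 = b then 1 else 0) ∧
      (∀ x, (τ.l x : ℤ) - (τ.k x : ℤ) =
        ((if x.1 0 = a ∧ x.1 1 = b then (1 : ℤ) else 0) -
          (if (t x).1 0 = a ∧ (t x).1 1 = b then (1 : ℤ) else 0))) := by

  classical
  -- clopen coordinate sets
  have hcoord : ∀ (n : ℕ) (c : Fin N), IsClopen {x : MarkovShift A | x.1 n = c} := by
    intro n c
    have hc : Continuous fun x : MarkovShift A => x.1 n :=
      (continuous_apply n).comp continuous_subtype_val
    have : {x : MarkovShift A | x.1 n = c} = (fun x : MarkovShift A => x.1 n) ⁻¹' {c} := rfl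
    rw [this]
    exact (isClopen_discrete _).preimage hc
  have hS1 : IsClopen {x : MarkovShift A | x.1 0 = a ∧ x.1 1 = b} := by
    have : {x : MarkovShift A | x.1 0 = a ∧ x.1 1 = b} =
        {x : MarkovShift A | x.1 0 = a} ∩ {x : MarkovShift A | x.1 1 = b} := rfl
    rw [this]
    exact (hcoord 0 a).inter (hcoord 1 b)
  have hS2 : IsClopen {x : MarkovShift A | x.1 0 = b} := hcoord 0 b
  -- t is an involution
  have hinv : ∀ x, t (t x) = x := by
    intro x
    by_cases h1 : x.1 0 = a ∧ x.1 1 = b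
    · have htx := ht1 x h1.1 h1.2
      have h0 : (t x).1 0 = b := by rw [htx]; exact h1.2
      obtain ⟨ha0, hrest⟩ := ht2 (t x) h0
      apply Subtype.ext; funext n
      cases n with
      | zero => rw [ha0, h1.1]
      | succ m => rw [hrest m, htx]; rfl
    · by_cases h2 : x.1 0 = b
      · obtain ⟨ha0, hrest⟩ := ht2 x h2
        have h1' : (t x).1 1 = b := by rw [hrest 0]; exact h2
        have htx := ht1 (t x) ha0 h1'
        apply Subtype.ext; funext n
        rw [htx]
        show (t x).1 (n + 1) = x.1 n
        exact hrest n
      · have htx := ht3 x h2 h1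
        rw [htx]; exact htx
  -- continuity of t
  have hval : Continuous fun x : MarkovShift A => (t x).1 := by
    rw [continuous_iff_continuousAt]
    intro x
    by_cases h1 : x.1 0 = a ∧ x.1 1 = b
    · have hc : Continuous fun y : MarkovShift A => (fun n => y.1 (n + 1) : ℕ → Fin N) :=
        continuous_pi fun n => (continuous_apply (n + 1)).comp continuous_subtype_val
      apply hc.continuousAt.congr
      filter_upwards [hS1.isOpen.mem_nhds h1] with y hy
      rw [ht1 y hy.1 hy.2]; rfl
    · by_cases h2 : x.1 0 = b
      · have hc : Continuous fun y : MarkovShift A =>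
            (fun n => Nat.rec a (fun m _ => y.1 m) n : ℕ → Fin N) := by
          apply continuous_pi
          intro n
          cases n with
          | zero => exact continuous_const
          | succ m => exact (continuous_apply m).comp continuous_subtype_val
        apply hc.continuousAt.congr
        filter_upwards [hS2.isOpen.mem_nhds h2] with y hy
        obtain ⟨ha0, hrest⟩ := ht2 y hy
        funext n
        cases n with
        | zero => exact ha0.symm
        | succ m => exact (hrest m).symm
      · have hU : IsOpen ({x : MarkovShift A | x.1 0 = a ∧ x.1 1 = b}ᶜ ∩
            {x : MarkovShift A | x.1 0 = b}ᶜ) := (hS1.compl.inter hS2.compl).isOpen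
        apply continuous_subtype_val.continuousAt.congr
        filter_upwards [hU.mem_nhds ⟨h1, h2⟩] with y hy
        rw [ht3 y hy.2 hy.1]
  have hcont : Continuous t := by
    have h2 : t = fun y => (⟨(t y).1, (t y).2⟩ : MarkovShift A) := rfl
    rw [h2]
    exact hval.subtype_mk _
  -- the homeomorphism
  let τh : MarkovShift A ≃ₜ MarkovShift A :=
    ⟨⟨t, t, hinv, hinv⟩, hcont, hcont⟩
  -- orbit functions
  have hlc : Continuous fun x : MarkovShift A =>
      (if x.1 0 = a ∧ x.1 1 = b then 1 else 0 : ℕ) :=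
    Continuous.if (fun x hx => by rw [hS1.frontier_eq] at hx; exact hx.elim)
      continuous_const continuous_const
  have hkc : Continuous fun x : MarkovShift A => (if x.1 0 = b then 1 else 0 : ℕ) :=
    Continuous.if (fun x hx => by rw [hS2.frontier_eq] at hx; exact hx.elim)
      continuous_const continuous_const
  have horbit : ∀ x, (shiftMap A)^[if x.1 0 = b then 1 else 0] (τh x) =
      (shiftMap A)^[if x.1 0 = a ∧ x.1 1 = b then 1 else 0] x := by
    intro x
    show (shiftMap A)^[if x.1 0 = b then 1 else 0] (t x) = _
    by_cases h1 : x.1 0 = a ∧ x.1 1 = b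
    · have h2 : ¬ x.1 0 = b := by rw [h1.1]; exact hab
      rw [if_neg h2, if_pos h1]
      simp only [Function.iterate_zero, Function.iterate_one, id]
      exact ht1 x h1.1 h1.2
    · by_cases h2 : x.1 0 = b
      · rw [if_pos h2, if_neg h1]
        simp only [Function.iterate_zero, Function.iterate_one, id]
        obtain ⟨ha0, hrest⟩ := ht2 x h2
        apply Subtype.ext; funext n
        exact hrest n
      · rw [if_neg h2, if_neg h1]
        simp only [Function.iterate_zero, id]
        exact ht3 x h2 h1
  refine ⟨⟨τh, fun x => if x.1 0 = b then 1 else 0,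
    fun x => if x.1 0 = a ∧ x.1 1 = b then 1 else 0, hkc, hlc, horbit⟩,
    fun x => rfl, fun x => rfl, fun x => rfl, ?_⟩
  intro x
  simp only
  by_cases h1 : x.1 0 = a ∧ x.1 1 = b
  · have h2 : ¬ x.1 0 = b := by rw [h1.1]; exact hab
    have htx := ht1 x h1.1 h1.2
    have hntx : ¬((t x).1 0 = a ∧ (t x).1 1 = b) := by
      rw [htx]
      intro h
      exact hab (h1.2 ▸ h.1 : b = a).symm
    rw [if_pos h1, if_neg h2, if_pos h1, if_neg hntx]
    norm_num
  · by_cases h2 : x.1 0 = b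
    · obtain ⟨ha0, hrest⟩ := ht2 x h2
      have htx : (t x).1 0 = a ∧ (t x).1 1 = b := ⟨ha0, by rw [hrest 0]; exact h2⟩
      rw [if_neg h1, if_pos h2, if_neg h1, if_pos htx]
      norm_num
    · have htx := ht3 x h2 h1
      rw [if_neg h1, if_neg h2, if_neg h1, htx, if_neg h1]
      norm_num
end

section
/- If a homeomorphism h of X_A commutes with every element of the continuous full group Γ_A, then h is the identity map. -/
/-- The continuous full group of `(X, σ)`, as a set of homeomorphisms. -/
def fullGroupSet {X : Type*} [TopologicalSpace X] (σ : X → X) : Set (X ≃ₜ X) :=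
  { τ | ∃ k l : X → ℕ, Continuous k ∧ Continuous l ∧ ∀ x, σ^[k x] (τ x) = σ^[l x] x }

lemma shift_iter {N : ℕ} (A : Fin N → Fin N → Bool) (m : ℕ) (z : MarkovShift A) (n : ℕ) :
    ((shiftMap A)^[m] z).1 n = z.1 (n + m) := by
  induction m generalizing z n with
  | zero => rfl
  | succ k ih =>
    rw [Function.iterate_succ_apply, ih]
    show z.1 (n + k + 1) = z.1 (n + (k + 1))
    ring_nf

lemma glue_adm {N : ℕ} (A : Fin N → Fin N → Bool) (ν : ℕ → Fin N) (M L : ℕ)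
    (hM : 0 < M) (hL : 0 < L)
    (hν : ∀ m, m + 1 < M → A (ν m) (ν (m + 1)) = true)
    (z : MarkovShift A) (hj : ν (M - 1) = z.1 (L - 1)) :
    ∀ n, A (if n < M then ν n else z.1 (n - M + L))
           (if n + 1 < M then ν (n + 1) else z.1 (n + 1 - M + L)) = true := by
  intro n
  rcases lt_trichotomy (n + 1) M with hc | hc | hc
  · rw [if_pos (by omega), if_pos hc]; exact hν n hc
  · rw [if_pos (by omega), if_neg (by omega)]
    have e1 : n = M - 1 := by omega
    have e2 : n + 1 - M + L = L := by omega
    rw [e2, e1, hj]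
    have := z.2 (L - 1)
    have e3 : L - 1 + 1 = L := by omega
    rwa [e3] at this
  · rw [if_neg (by omega), if_neg (by omega)]
    have e : n + 1 - M + L = (n - M + L) + 1 := by omega
    rw [e]
    exact z.2 _

lemma cyl_clopen {N : ℕ} (A : Fin N → Fin N → Bool) (μ : ℕ → Fin N) (L : ℕ) :
    IsClopen {z : MarkovShift A | ∀ m < L, z.1 m = μ m} := by
  have he : {z : MarkovShift A | ∀ m < L, z.1 m = μ m}
      = ⋂ m ∈ Finset.range L, ((fun z : MarkovShift A => z.1 m) ⁻¹' {μ m}) := by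
    ext z; simp [Finset.mem_range]
  rw [he]
  apply isClopen_biInter_finset
  intro m _
  exact (isClopen_discrete _).preimage ((continuous_apply m).comp continuous_subtype_val)

lemma path_concat {N : ℕ} (A : Fin N → Fin N → Bool) {p q : ℕ → Fin N} {a b : ℕ} (ha : 0 < a)
    (hp : ∀ m < a, A (p m) (p (m + 1)) = true) (hq : ∀ m < b, A (q m) (q (m + 1)) = true)
    (hpq : p a = q 0) :
    ∃ r : ℕ → Fin N, (∀ m ≤ a, r m = p m) ∧ (∀ m, r (a + m) = q m) ∧
      (∀ m < a + b, A (r m) (r (m + 1)) = true) := by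
  refine ⟨fun m => if m ≤ a then p m else q (m - a), fun m hm => if_pos hm, ?_, ?_⟩
  · intro m
    dsimp only
    rcases Nat.eq_zero_or_pos m with rfl | hm
    · simpa using hpq
    · rw [if_neg (by omega)]
      congr 1
      omega
  · intro m hm
    dsimp only
    rcases lt_trichotomy (m + 1) a with hc | hc | hc
    · rw [if_pos (by omega), if_pos (by omega)]; exact hp m (by omega)
    · rw [if_pos (by omega), if_pos (by omega)]; exact hp m (by omega)
    · rcases Nat.lt_or_ge m a with hma | hma
      · omega
      · rcases Nat.eq_or_lt_of_le hma with rfl | hma'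
        · rw [if_pos (le_refl _), if_neg (by omega), hpq]
          have e : a + 1 - a = 1 := by omega
          rw [e]
          exact hq 0 (by omega)
        · rw [if_neg (by omega), if_neg (by omega)]
          have e : m + 1 - a = (m - a) + 1 := by omega
          rw [e]
          exact hq (m - a) (by omega)

lemma exists_branch {N : ℕ} (A : Fin N → Fin N → Bool)
    (hirr : IsIrreducibleMatrix A) (hnp : ¬ IsPermutationMatrix A) :
    ∃ i j1 j2 : Fin N, j1 ≠ j2 ∧ A i j1 = true ∧ A i j2 = true := by
  by_contra hno
  push_neg at hno
  -- every row has at most one `true`; rows have at least one from irreducibility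
  have hrow : ∀ i : Fin N, ∃ j, A i j = true := by
    intro i
    obtain ⟨n, hn, p, hp0, hpn, hpath⟩ := hirr i i
    exact ⟨p 1, by rw [← hp0]; exact hpath 0 hn⟩
  have huniq : ∀ i j1 j2 : Fin N, A i j1 = true → A i j2 = true → j1 = j2 := by
    intro i j1 j2 h1 h2
    by_contra hne
    exact hno i j1 j2 hne h1 h2
  classical
  let f : Fin N → Fin N := fun i => (hrow i).choose
  have hf : ∀ i, A i (f i) = true := fun i => (hrow i).choose_spec
  have hfval : ∀ i j, A i j = true → f i = j := fun i j hj => huniq i (f i) j (hf i) hj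
  have hsurj : Function.Surjective f := by
    intro j
    obtain ⟨n, hn, p, hp0, hpn, hpath⟩ := hirr j j
    have : A (p (n - 1)) (p n) = true := by
      have := hpath (n - 1) (by omega)
      have e : n - 1 + 1 = n := by omega
      rwa [e] at this
    exact ⟨p (n - 1), by rw [hfval _ _ this, hpn]⟩
  have hinj : Function.Injective f := Finite.injective_iff_surjective.mpr hsurj
  apply hnp
  constructor
  · intro i
    exact ⟨f i, hf i, fun j hj => (hfval i j hj).symm⟩
  · intro j
    obtain ⟨i, rfl⟩ := hsurj j
    exact ⟨i, hf i, fun i' hi' => hinj (hfval i' (f i) hi')⟩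

def swapFun {N : ℕ} (A : Fin N → Fin N → Bool) (μ ν : ℕ → Fin N) (L M : ℕ)
    (hL : 0 < L) (hM : 0 < M)
    (hμ : ∀ m, m + 1 < L → A (μ m) (μ (m + 1)) = true)
    (hν : ∀ m, m + 1 < M → A (ν m) (ν (m + 1)) = true)
    (hend : ν (M - 1) = μ (L - 1)) (z : MarkovShift A) : MarkovShift A :=
  if h1 : ∀ m, m < L → z.1 m = μ m then
    ⟨fun k => if k < M then ν k else z.1 (k - M + L),
      glue_adm A ν M L hM hL hν z (by rw [hend]; exact (h1 (L - 1) (by omega)).symm)⟩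
  else if h2 : ∀ m, m < M → z.1 m = ν m then
    ⟨fun k => if k < L then μ k else z.1 (k - L + M),
      glue_adm A μ L M hL hM hμ z (by rw [← hend]; exact (h2 (M - 1) (by omega)).symm)⟩
  else z

section swaplemmas

variable {N : ℕ} (A : Fin N → Fin N → Bool) (μ ν : ℕ → Fin N) (L M : ℕ)
    (hL : 0 < L) (hM : 0 < M)
    (hμ : ∀ m, m + 1 < L → A (μ m) (μ (m + 1)) = true)
    (hν : ∀ m, m + 1 < M → A (ν m) (ν (m + 1)) = true)
    (hend : ν (M - 1) = μ (L - 1))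

lemma swap_coord1 (z : MarkovShift A) (h1 : ∀ m, m < L → z.1 m = μ m) (k : ℕ) :
    (swapFun A μ ν L M hL hM hμ hν hend z).1 k = if k < M then ν k else z.1 (k - M + L) := by
  simp only [swapFun, dif_pos h1]

lemma swap_coord2 (z : MarkovShift A) (h1 : ¬ ∀ m, m < L → z.1 m = μ m)
    (h2 : ∀ m, m < M → z.1 m = ν m) (k : ℕ) :
    (swapFun A μ ν L M hL hM hμ hν hend z).1 k = if k < L then μ k else z.1 (k - L + M) := by
  simp only [swapFun, dif_neg h1, dif_pos h2]

lemma swap_coord3 (z : MarkovShift A) (h1 : ¬ ∀ m, m < L → z.1 m = μ m)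
    (h2 : ¬ ∀ m, m < M → z.1 m = ν m) :
    swapFun A μ ν L M hL hM hμ hν hend z = z := by
  simp only [swapFun, dif_neg h1, dif_neg h2]

lemma swap_invol (hdisj : ∃ p, p < L ∧ p < M ∧ μ p ≠ ν p) :
    Function.Involutive (swapFun A μ ν L M hL hM hμ hν hend) := by
  obtain ⟨pp, hpL, hpM, hpne⟩ := hdisj
  intro z
  by_cases h1 : ∀ m, m < L → z.1 m = μ m
  · set w := swapFun A μ ν L M hL hM hμ hν hend z with hwdef
    have hw : ∀ k, w.1 k = if k < M then ν k else z.1 (k - M + L) :=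
      swap_coord1 A μ ν L M hL hM hμ hν hend z h1
    have hw2 : ∀ m, m < M → w.1 m = ν m := fun m hm => by rw [hw m, if_pos hm]
    have hw1 : ¬ ∀ m, m < L → w.1 m = μ m := by
      intro hc
      exact hpne ((hc pp hpL).symm.trans (hw2 pp hpM))
    apply Subtype.ext; funext k
    rw [swap_coord2 A μ ν L M hL hM hμ hν hend w hw1 hw2 k]
    by_cases hk : k < L
    · rw [if_pos hk]; exact (h1 k hk).symm
    · rw [if_neg hk, hw (k - L + M), if_neg (by omega)]
      have e : k - L + M - M + L = k := by omega
      rw [e]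
  · by_cases h2 : ∀ m, m < M → z.1 m = ν m
    · set w := swapFun A μ ν L M hL hM hμ hν hend z with hwdef
      have hw : ∀ k, w.1 k = if k < L then μ k else z.1 (k - L + M) :=
        swap_coord2 A μ ν L M hL hM hμ hν hend z h1 h2
      have hw1 : ∀ m, m < L → w.1 m = μ m := fun m hm => by rw [hw m, if_pos hm]
      apply Subtype.ext; funext k
      rw [swap_coord1 A μ ν L M hL hM hμ hν hend w hw1 k]
      by_cases hk : k < M
      · rw [if_pos hk]; exact (h2 k hk).symm
      · rw [if_neg hk, hw (k - M + L), if_neg (by omega)]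
        have e : k - M + L - L + M = k := by omega
        rw [e]
    · rw [swap_coord3 A μ ν L M hL hM hμ hν hend z h1 h2,
          swap_coord3 A μ ν L M hL hM hμ hν hend z h1 h2]

lemma swap_continuous : Continuous (swapFun A μ ν L M hL hM hμ hν hend) := by
  classical
  set Cμ : Set (MarkovShift A) := {z | ∀ m < L, z.1 m = μ m} with hCμdef
  set Cν : Set (MarkovShift A) := {z | ∀ m < M, z.1 m = ν m} with hCνdef
  have hCμ : IsClopen Cμ := cyl_clopen A μ L
  have hCν : IsClopen Cν := cyl_clopen A ν M
  have g1c : Continuous (fun z : MarkovShift A => fun k => if k < M then ν k else z.1 (k - M + L)) := by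
    refine continuous_pi fun k => ?_
    by_cases hk : k < M
    · simp only [if_pos hk]; exact continuous_const
    · simp only [if_neg hk]; exact (continuous_apply _).comp continuous_subtype_val
  have g2c : Continuous (fun z : MarkovShift A => fun k => if k < L then μ k else z.1 (k - L + M)) := by
    refine continuous_pi fun k => ?_
    by_cases hk : k < L
    · simp only [if_pos hk]; exact continuous_const
    · simp only [if_neg hk]; exact (continuous_apply _).comp continuous_subtype_val
  have contF : Continuous (fun z => (swapFun A μ ν L M hL hM hμ hν hend z).1) := by
    have e : (fun z => (swapFun A μ ν L M hL hM hμ hν hend z).1)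
        = Set.piecewise Cμ (fun z => fun k => if k < M then ν k else z.1 (k - M + L))
            (Set.piecewise Cν (fun z => fun k => if k < L then μ k else z.1 (k - L + M))
              Subtype.val) := by
      funext z
      by_cases h1 : ∀ m, m < L → z.1 m = μ m
      · have h1' : z ∈ Cμ := h1
        rw [Set.piecewise_eq_of_mem _ _ _ h1']
        exact funext (swap_coord1 A μ ν L M hL hM hμ hν hend z h1)
      · have h1' : z ∉ Cμ := h1
        rw [Set.piecewise_eq_of_notMem _ _ _ h1']
        by_cases h2 : ∀ m, m < M → z.1 m = ν m
        · have h2' : z ∈ Cν := h2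
          rw [Set.piecewise_eq_of_mem _ _ _ h2']
          exact funext (swap_coord2 A μ ν L M hL hM hμ hν hend z h1 h2)
        · have h2' : z ∉ Cν := h2
          rw [Set.piecewise_eq_of_notMem _ _ _ h2',
              swap_coord3 A μ ν L M hL hM hμ hν hend z h1 h2]
    rw [e]
    refine Continuous.piecewise ?_ g1c (Continuous.piecewise ?_ g2c continuous_subtype_val)
    · simp [hCμ.frontier_eq]
    · simp [hCν.frontier_eq]
  exact continuous_induced_rng.mpr contF

end swaplemmas

lemma exists_cylswap {N : ℕ} (A : Fin N → Fin N → Bool) (μ ν : ℕ → Fin N) (L M : ℕ)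
    (hL : 0 < L) (hM : 0 < M)
    (hμ : ∀ m, m + 1 < L → A (μ m) (μ (m + 1)) = true)
    (hν : ∀ m, m + 1 < M → A (ν m) (ν (m + 1)) = true)
    (hend : ν (M - 1) = μ (L - 1))
    (hdisj : ∃ p, p < L ∧ p < M ∧ μ p ≠ ν p) :
    ∃ τ : MarkovShift A ≃ₜ MarkovShift A, τ ∈ fullGroupSet (shiftMap A) ∧
      (∀ z : MarkovShift A, (∀ m, m < L → z.1 m = μ m) → ∀ m, m < M → (τ z).1 m = ν m) ∧
      (∀ z : MarkovShift A, ¬(∀ m, m < L → z.1 m = μ m) → ¬(∀ m, m < M → z.1 m = ν m) →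
        τ z = z) := by
  classical
  set f := swapFun A μ ν L M hL hM hμ hν hend with hfdef
  have hinv : Function.Involutive f := swap_invol A μ ν L M hL hM hμ hν hend hdisj
  have hcont : Continuous f := swap_continuous A μ ν L M hL hM hμ hν hend
  refine ⟨⟨hinv.toPerm, hcont, hcont⟩, ?_, ?_, ?_⟩
  · -- full group membership
    set Cμ : Set (MarkovShift A) := {z | ∀ m < L, z.1 m = μ m} with hCμdef
    set Cν : Set (MarkovShift A) := {z | ∀ m < M, z.1 m = ν m} with hCνdef
    have hCμ : IsClopen Cμ := cyl_clopen A μ L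
    have hCν : IsClopen Cν := cyl_clopen A ν M
    refine ⟨Cμ.piecewise (fun _ => M) (Cν.piecewise (fun _ => L) (fun _ => 0)),
            Cμ.piecewise (fun _ => L) (Cν.piecewise (fun _ => M) (fun _ => 0)), ?_, ?_, ?_⟩
    · exact Continuous.piecewise (by simp [hCμ.frontier_eq]) continuous_const
        (Continuous.piecewise (by simp [hCν.frontier_eq]) continuous_const continuous_const)
    · exact Continuous.piecewise (by simp [hCμ.frontier_eq]) continuous_const
        (Continuous.piecewise (by simp [hCν.frontier_eq]) continuous_const continuous_const)
    · intro z
      by_cases h1 : ∀ m, m < L → z.1 m = μ m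
      · have h1' : z ∈ Cμ := h1
        rw [Set.piecewise_eq_of_mem _ _ _ h1', Set.piecewise_eq_of_mem _ _ _ h1']
        apply Subtype.ext; funext n
        rw [shift_iter, shift_iter]
        show (f z).1 (n + M) = z.1 (n + L)
        rw [swap_coord1 A μ ν L M hL hM hμ hν hend z h1, if_neg (by omega)]
        have e : n + M - M + L = n + L := by omega
        rw [e]
      · have h1' : z ∉ Cμ := h1
        rw [Set.piecewise_eq_of_notMem _ _ _ h1', Set.piecewise_eq_of_notMem _ _ _ h1']
        by_cases h2 : ∀ m, m < M → z.1 m = ν m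
        · have h2' : z ∈ Cν := h2
          rw [Set.piecewise_eq_of_mem _ _ _ h2', Set.piecewise_eq_of_mem _ _ _ h2']
          apply Subtype.ext; funext n
          rw [shift_iter, shift_iter]
          show (f z).1 (n + L) = z.1 (n + M)
          rw [swap_coord2 A μ ν L M hL hM hμ hν hend z h1 h2, if_neg (by omega)]
          have e : n + L - L + M = n + M := by omega
          rw [e]
        · have h2' : z ∉ Cν := h2
          rw [Set.piecewise_eq_of_notMem _ _ _ h2', Set.piecewise_eq_of_notMem _ _ _ h2']
          show (shiftMap A)^[0] (f z) = (shiftMap A)^[0] z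
          simp only [Function.iterate_zero, id_eq]
          exact swap_coord3 A μ ν L M hL hM hμ hν hend z h1 h2
  · intro z h1 m hm
    show (f z).1 m = ν m
    rw [swap_coord1 A μ ν L M hL hM hμ hν hend z h1, if_pos hm]
  · intro z h1 h2
    exact swap_coord3 A μ ν L M hL hM hμ hν hend z h1 h2

/-- a homeomorphism of `X_A` commuting with every element of the
continuous full group `Γ_A` is the identity. -/
theorem eq_id_of_commutes_with_fullGroup {N : ℕ} (A : Fin N → Fin N → Bool)
    (hirr : IsIrreducibleMatrix A) (hnp : ¬ IsPermutationMatrix A)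
    (h : MarkovShift A ≃ₜ MarkovShift A)
    (hcomm : ∀ τ ∈ fullGroupSet (shiftMap A), ∀ x, h (τ x) = τ (h x)) :
    ∀ x, h x = x := by
  classical
  intro x
  by_contra hne
  have hxy : ∃ n, x.1 n ≠ (h x).1 n := by
    by_contra hall
    push_neg at hall
    exact hne (Subtype.ext (funext fun n => (hall n).symm))
  obtain ⟨n₀, hn₀⟩ := hxy
  obtain ⟨i, j1, j2, hj12, hA1, hA2⟩ := exists_branch A hirr hnp
  -- loop through i with first step j1
  obtain ⟨m1, hm1, q1, hq10, hq1m, hq1adm⟩ := hirr j1 i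
  have hp1adm : ∀ m < 1, A ((fun k => if k = 0 then i else j1) m)
      ((fun k => if k = 0 then i else j1) (m + 1)) = true := by
    intro m hm
    obtain rfl : m = 0 := by omega
    simpa using hA1
  obtain ⟨w1, hw1pre, hw1suf, hw1adm⟩ :=
    path_concat A (a := 1) (b := m1) (by omega) hp1adm hq1adm (by simpa using hq10.symm)
  set ℓ1 := 1 + m1 with hl1
  have hw1_0 : w1 0 = i := (hw1pre 0 (by omega)).trans (by simp)
  have hw1_1 : w1 1 = j1 := (hw1pre 1 (by omega)).trans (by simp)
  have hw1_end : w1 ℓ1 = i := by rw [hl1, hw1suf m1, hq1m]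
  -- loop through i with first step j2
  obtain ⟨m2, hm2, q2, hq20, hq2m, hq2adm⟩ := hirr j2 i
  have hp2adm : ∀ m < 1, A ((fun k => if k = 0 then i else j2) m)
      ((fun k => if k = 0 then i else j2) (m + 1)) = true := by
    intro m hm
    obtain rfl : m = 0 := by omega
    simpa using hA2
  obtain ⟨w2, hw2pre, hw2suf, hw2adm⟩ :=
    path_concat A (a := 1) (b := m2) (by omega) hp2adm hq2adm (by simpa using hq20.symm)
  set ℓ2 := 1 + m2 with hl2
  have hw2_0 : w2 0 = i := (hw2pre 0 (by omega)).trans (by simp)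
  have hw2_1 : w2 1 = j2 := (hw2pre 1 (by omega)).trans (by simp)
  have hw2_end : w2 ℓ2 = i := by rw [hl2, hw2suf m2, hq2m]
  -- the cylinder length for x and the target vertex
  set L := n₀ + ℓ1 + 2 with hLdef
  set v := x.1 (L - 1) with hvdef
  obtain ⟨mr, hmr, r, hr0, hrm, hradm⟩ := hirr i v
  -- candidate a : w2 followed by r
  obtain ⟨νa, hapre, hasuf, haadm⟩ :=
    path_concat A (a := ℓ2) (b := mr) (by omega) hw2adm hradm (hw2_end.trans hr0.symm)
  set Ka := ℓ2 + mr with hKa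
  have ha1 : νa 1 = j2 := (hapre 1 (by omega)).trans hw2_1
  have ha0 : νa 0 = i := (hapre 0 (by omega)).trans hw2_0
  have haend : νa Ka = v := by rw [hKa, hasuf mr, hrm]
  -- s : w1 followed by r
  obtain ⟨s, hspre, hssuf, hsadm⟩ :=
    path_concat A (a := ℓ1) (b := mr) (by omega) hw1adm hradm (hw1_end.trans hr0.symm)
  have hs0 : s 0 = i := (hspre 0 (by omega)).trans hw1_0
  have hs1 : s 1 = j1 := (hspre 1 (by omega)).trans hw1_1
  have hsend : s (ℓ1 + mr) = v := by rw [hssuf mr, hrm]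
  -- candidate b : w1 followed by s
  obtain ⟨νb, hbpre, hbsuf, hbadm⟩ :=
    path_concat A (a := ℓ1) (b := ℓ1 + mr) (by omega) hw1adm hsadm (hw1_end.trans hs0.symm)
  set Kb := ℓ1 + (ℓ1 + mr) with hKb
  have hb1 : νb 1 = j1 := (hbpre 1 (by omega)).trans hw1_1
  have hbl : νb (ℓ1 + 1) = j1 := (hbsuf 1).trans hs1
  have hbend : νb Kb = v := by rw [hKb, hbsuf (ℓ1 + mr), hsend]
  -- candidate c : w1 followed by νa
  obtain ⟨νc, hcpre, hcsuf, hcadm⟩ :=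
    path_concat A (a := ℓ1) (b := Ka) (by omega) hw1adm haadm (hw1_end.trans ha0.symm)
  set Kc := ℓ1 + Ka with hKc
  have hc1 : νc 1 = j1 := (hcpre 1 (by omega)).trans hw1_1
  have hcl : νc (ℓ1 + 1) = j2 := (hcsuf 1).trans ha1
  have hcend : νc Kc = v := by rw [hKc, hcsuf Ka, haend]
  -- a good candidate yields a contradiction
  have useC : ∀ (ν : ℕ → Fin N) (K : ℕ), 0 < K →
      (∀ m, m < K → A (ν m) (ν (m + 1)) = true) → ν K = v →
      ¬(∀ m, m < L → m < K + 1 → x.1 m = ν m) →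
      ¬(∀ m, m < K + 1 → (h x).1 m = ν m) → False := by
    intro ν K hK hadm hKend hnb1 hnb2
    push_neg at hnb1
    obtain ⟨p, hp1, hp2, hp3⟩ := hnb1
    obtain ⟨τ, hmem, hτμ, hτfix⟩ :=
      exists_cylswap A x.1 ν L (K + 1) (by omega) (by omega)
        (fun m _ => x.2 m) (fun m hm => hadm m (by omega))
        (by simpa using hKend) ⟨p, hp1, hp2, fun he => hp3 he⟩
    have hfix : τ (h x) = h x := by
      apply hτfix
      · intro hc
        exact hn₀ ((hc n₀ (by omega)).symm)
      · exact hnb2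
    have hmove : (τ x).1 p = ν p := hτμ x (fun _ _ => rfl) p hp2
    have he1 : h (τ x) = h x := by rw [hcomm τ hmem x, hfix]
    have he2 : τ x = x := h.injective he1
    rw [he2] at hmove
    exact hp3 hmove
  -- exclusion lemmas
  have excl1 : ∀ (ν ν' : ℕ → Fin N) (K K' p : ℕ), p < L → p < K + 1 → p < K' + 1 →
      ν p ≠ ν' p → (∀ m, m < L → m < K + 1 → x.1 m = ν m) →
      (∀ m, m < L → m < K' + 1 → x.1 m = ν' m) → False := by
    intro ν ν' K K' p hpL hpK hpK' hpne e f
    exact hpne ((e p hpL hpK).symm.trans (f p hpL hpK'))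
  have excl2 : ∀ (ν ν' : ℕ → Fin N) (K K' p : ℕ), p < K + 1 → p < K' + 1 →
      ν p ≠ ν' p → (∀ m, m < K + 1 → (h x).1 m = ν m) →
      (∀ m, m < K' + 1 → (h x).1 m = ν' m) → False := by
    intro ν ν' K K' p hpK hpK' hpne e f
    exact hpne ((e p hpK).symm.trans (f p hpK'))
  have dab : νa 1 ≠ νb 1 := by rw [ha1, hb1]; exact fun hh => hj12 hh.symm
  have dac : νa 1 ≠ νc 1 := by rw [ha1, hc1]; exact fun hh => hj12 hh.symm
  have dbc : νb (ℓ1 + 1) ≠ νc (ℓ1 + 1) := by rw [hbl, hcl]; exact hj12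
  -- selection among the three candidates
  by_cases Ha1 : ∀ m, m < L → m < Ka + 1 → x.1 m = νa m
  · by_cases Hb2 : ∀ m, m < Kb + 1 → (h x).1 m = νb m
    · -- use c
      refine useC νc Kc (by omega) hcadm hcend ?_ ?_
      · exact fun Hc1 => excl1 νa νc Ka Kc 1 (by omega) (by omega) (by omega) dac Ha1 Hc1
      · exact fun Hc2 => excl2 νb νc Kb Kc (ℓ1 + 1) (by omega) (by omega) dbc Hb2 Hc2
    · -- use b
      refine useC νb Kb (by omega) hbadm hbend ?_ Hb2
      exact fun Hb1 => excl1 νa νb Ka Kb 1 (by omega) (by omega) (by omega) dab Ha1 Hb1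
  · by_cases Ha2 : ∀ m, m < Ka + 1 → (h x).1 m = νa m
    · by_cases Hb1 : ∀ m, m < L → m < Kb + 1 → x.1 m = νb m
      · -- use c
        refine useC νc Kc (by omega) hcadm hcend ?_ ?_
        · exact fun Hc1 => excl1 νb νc Kb Kc (ℓ1 + 1) (by omega) (by omega) (by omega) dbc Hb1 Hc1
        · exact fun Hc2 => excl2 νa νc Ka Kc 1 (by omega) (by omega) dac Ha2 Hc2
      · -- use b
        refine useC νb Kb (by omega) hbadm hbend Hb1 ?_
        exact fun Hb2 => excl2 νa νb Ka Kb 1 (by omega) (by omega) dab Ha2 Hb2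
    · exact useC νa Ka (by omega) haadm haend Ha1 Ha2
end

section
/- Suppose h : X_A → X_B gives a continuous orbit equivalence with cocycle function c_2 on X_B, and suppose c_1 = 1 + b_1 − b_1∘σ_A (strong continuous orbit equivalence), with c_2 = 1 + b_2 − b_2∘σ_B. Then for the induced map Φ_h on cocycles, Φ_h(d^A)(y,φ) = d^B(y,φ) + b_2(y) − b_2(φ(y)) for all (y,φ) ∈ X_B × Γ_B; hence Φ_h([d^A]) = [d^B] in H^1(Γ_B,X_B;ℤ). -/
/-!
A continuous orbit equivalence whose cocycle is cohomologous to `1` via `b` transports lags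
along orbits up to a coboundary: if `σ^[a] z = σ^[c] y`, then `h z` lies `(c - a) + b y - b z`
steps ahead of `h y`. At a point `y` whose forward orbit is infinite, lags from `y` are well
defined; computing the lag of `φ y` ahead of `y` once through `ψ` and `h`, and once through `h⁻¹`
and `h`, gives the identity at `y`. Such points are dense and both sides are continuous, so the
identity holds everywhere.
-/

open Function Filter Topology

/-- `z` lies `d` steps ahead of `y` on a common forward orbit of `σ`. -/
def OrbitLag {X : Type*} (σ : X → X) (z y : X) (d : ℤ) : Prop :=
  ∃ a b : ℕ, σ^[a] z = σ^[b] y ∧ (b : ℤ) - a = d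

namespace OrbitLag

variable {X Y : Type*} {σ : X → X} {y z w : X} {d e : ℤ}

lemma of_iterate_eq {a b : ℕ} (h : σ^[a] z = σ^[b] y) : OrbitLag σ z y (b - a) :=
  ⟨a, b, h, rfl⟩

lemma refl (σ : X → X) (y : X) : OrbitLag σ y y 0 :=
  ⟨0, 0, rfl, by simp⟩

lemma symm : OrbitLag σ z y d → OrbitLag σ y z (-d)
  | ⟨a, b, h, hd⟩ => ⟨b, a, h.symm, by omega⟩

lemma trans : OrbitLag σ z w d → OrbitLag σ w y e → OrbitLag σ z y (d + e)
  | ⟨a, b, h, hd⟩, ⟨c, f, h', he⟩ => by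
    refine ⟨a + c, b + f, ?_, by push_cast; omega⟩
    rw [Nat.add_comm a c, iterate_add_apply, h, ← iterate_add_apply, Nat.add_comm c b,
      iterate_add_apply, h', ← iterate_add_apply]

lemma eq_zero (hy : Injective fun n => σ^[n] y) : OrbitLag σ y y d → d = 0
  | ⟨a, b, h, hd⟩ => by rw [← hd, hy h, sub_self]

lemma unique (hy : Injective fun n => σ^[n] y) (hd : OrbitLag σ z y d) (he : OrbitLag σ z y e) :
    d = e := by
  have := (hd.symm.trans he).eq_zero hy
  omega

section Transport

variable {σ₁ : X → X} {σ₂ : Y → Y} {H : X → Y} {k l : X → ℕ} {b : X → ℤ}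

lemma map_iterate (horb : ∀ x, σ₂^[k x] (H (σ₁ x)) = σ₂^[l x] (H x))
    (hc : ∀ x, (l x : ℤ) - k x = 1 + b x - b (σ₁ x)) (n : ℕ) (x : X) :
    OrbitLag σ₂ (H (σ₁^[n] x)) (H x) (n + b x - b (σ₁^[n] x)) := by
  induction n generalizing x with
  | zero => simpa using refl σ₂ (H x)
  | succ n ih =>
    rw [iterate_succ_apply]
    convert (ih (σ₁ x)).trans (of_iterate_eq (horb x)) using 1
    rw [hc]
    push_cast
    ring

lemma map (horb : ∀ x, σ₂^[k x] (H (σ₁ x)) = σ₂^[l x] (H x))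
    (hc : ∀ x, (l x : ℤ) - k x = 1 + b x - b (σ₁ x)) (hzy : OrbitLag σ₁ z y d) :
    OrbitLag σ₂ (H z) (H y) (d + b y - b z) := by
  obtain ⟨a, c, h, rfl⟩ := hzy
  have hz := map_iterate horb hc a z
  rw [h] at hz
  convert hz.symm.trans (map_iterate horb hc c y) using 1
  ring

end Transport

end OrbitLag

namespace IsIrreducibleMatrix

variable {M : ℕ} {B : Fin M → Fin M → Bool}

lemma exists_succ (hB : IsIrreducibleMatrix B) (i : Fin M) : ∃ j, B i j = true := by
  obtain ⟨n, hn, p, hp0, -, hp⟩ := hB i i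
  exact ⟨p 1, hp0 ▸ hp 0 hn⟩

lemma exists_pred (hB : IsIrreducibleMatrix B) (j : Fin M) : ∃ i, B i j = true := by
  obtain ⟨n, hn, p, -, hpn, hp⟩ := hB j j
  refine ⟨p (n - 1), ?_⟩
  simpa [Nat.sub_add_cancel hn, hpn] using hp (n - 1) (by omega)

/-- If every row had a single `1`, the successor map would be surjective, hence a permutation. -/
lemma exists_two_succ (hB : IsIrreducibleMatrix B) (hnp : ¬ IsPermutationMatrix B) :
    ∃ v a a', a ≠ a' ∧ B v a = true ∧ B v a' = true := by
  by_contra! hone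
  choose f hf using hB.exists_succ
  have hrow : ∀ i j, B i j = true → j = f i := fun i j hij => by
    by_contra hne
    exact hone i j (f i) hne hij (hf i)
  have hsurj : Surjective f := fun j => by
    obtain ⟨i, hi⟩ := hB.exists_pred j
    exact ⟨i, (hrow i j hi).symm⟩
  have hinj : Injective f := Finite.injective_iff_surjective.2 hsurj
  refine hnp ⟨fun i => ⟨f i, hf i, hrow i⟩, fun j => ?_⟩
  obtain ⟨i, rfl⟩ := hsurj j
  exact ⟨i, hf i, fun i' hi' => hinj (hrow i' _ hi').symm⟩

lemma exists_point_start (hB : IsIrreducibleMatrix B) (i : Fin M) :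
    ∃ x : MarkovShift B, x.1 0 = i := by
  choose f hf using hB.exists_succ
  exact ⟨⟨fun t => f^[t] i, fun t => by simpa only [iterate_succ_apply'] using hf _⟩, rfl⟩

end IsIrreducibleMatrix

namespace MarkovShift

variable {M : ℕ} {B : Fin M → Fin M → Bool}

lemma iterate_shiftMap_apply (n : ℕ) (x : MarkovShift B) (j : ℕ) :
    ((shiftMap B)^[n] x).1 j = x.1 (j + n) := by
  induction n generalizing x with
  | zero => rfl
  | succ n ih => rw [iterate_succ_apply, ih]; rfl

lemma isClosed_setOf_admissible :
    IsClosed {x : ℕ → Fin M | ∀ n, B (x n) (x (n + 1)) = true} := by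
  simp only [Set.ofPred_forall]
  exact isClosed_iInter fun n => isClosed_eq (by fun_prop) continuous_const

instance : CompactSpace (MarkovShift B) :=
  isCompact_iff_compactSpace.1 isClosed_setOf_admissible.isCompact

lemma exists_splice (u : ℕ → Fin M) (L : ℕ) (hu : ∀ t < L, B (u t) (u (t + 1)) = true)
    (w : MarkovShift B) (hw : w.1 0 = u L) :
    ∃ z : MarkovShift B, (∀ t ≤ L, z.1 t = u t) ∧ ∀ t, z.1 (L + t) = w.1 t := by
  let z : ℕ → Fin M := fun t => if t ≤ L then u t else w.1 (t - L)
  have hz : ∀ t, z (L + t) = w.1 t := by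
    rintro (_ | t)
    · simp [z, hw]
    · simp [z]
  refine ⟨⟨z, fun t => ?_⟩, fun t ht => if_pos ht, hz⟩
  rcases lt_or_ge t L with ht | ht
  · simp only [z, if_pos ht.le, if_pos (Nat.succ_le_of_lt ht)]
    exact hu t ht
  · obtain ⟨s, rfl⟩ := Nat.exists_eq_add_of_le ht
    rw [add_assoc, hz, hz]
    exact w.2 s

lemma exists_ne_of_eqOn_prefix (hB : IsIrreducibleMatrix B) (hnp : ¬ IsPermutationMatrix B)
    (y : MarkovShift B) (L : ℕ) : ∃ z : MarkovShift B, z ≠ y ∧ ∀ t ≤ L, z.1 t = y.1 t := by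
  obtain ⟨v, a, a', hne, ha, ha'⟩ := hB.exists_two_succ hnp
  obtain ⟨n, -, p, hp0, hpn, hp⟩ := hB (y.1 L) v
  have hbranch : ∀ c, B v c = true →
      ∃ z : MarkovShift B, (∀ t ≤ L, z.1 t = y.1 t) ∧ z.1 (L + (n + 1)) = c := by
    intro c hc
    obtain ⟨w, hw⟩ := hB.exists_point_start c
    obtain ⟨q, hq, -⟩ := exists_splice (fun t => if t = 0 then v else c) 1
      (fun t ht => by simpa [Nat.lt_one_iff.1 ht] using hc) w hw
    obtain ⟨r, hr, hr'⟩ := exists_splice p n hp q (by simpa [hpn] using hq 0 (by omega))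
    obtain ⟨z, hz, hz'⟩ := exists_splice y.1 L (fun t _ => y.2 t) r (by simpa [hp0] using hr 0)
    exact ⟨z, hz, by rw [hz', hr', hq 1 le_rfl]; simp⟩
  by_cases hy : y.1 (L + (n + 1)) = a
  · obtain ⟨z, hz, hz'⟩ := hbranch a' ha'
    exact ⟨z, fun h => hne (by rw [← hy, ← hz', h]), hz⟩
  · obtain ⟨z, hz, hz'⟩ := hbranch a ha
    exact ⟨z, fun h => hy (by rw [← hz', h]), hz⟩

lemma not_isOpen_singleton (hB : IsIrreducibleMatrix B) (hnp : ¬ IsPermutationMatrix B)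
    (y : MarkovShift B) : ¬ IsOpen {y} := by
  choose z hne hz using exists_ne_of_eqOn_prefix hB hnp y
  have hlim : Tendsto z atTop (𝓝 y) := by
    rw [IsEmbedding.subtypeVal.tendsto_nhds_iff, tendsto_pi_nhds]
    intro j
    refine tendsto_const_nhds.congr' ?_
    filter_upwards [eventually_ge_atTop j] with L hL
    exact (hz L j hL).symm
  intro hopen
  obtain ⟨L, hL⟩ := (hlim.eventually (hopen.mem_nhds rfl)).exists
  exact hne L hL

lemma finite_setOf_iterate_eq {m n : ℕ} (hmn : m < n) :
    {y : MarkovShift B | (shiftMap B)^[m] y = (shiftMap B)^[n] y}.Finite := by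
  refine Set.Finite.of_finite_image (f := fun y (i : Fin n) => y.1 i) (Set.toFinite _) ?_
  have hperiod : ∀ y : MarkovShift B, (shiftMap B)^[m] y = (shiftMap B)^[n] y →
      ∀ s, y.1 (s + n) = y.1 (s + m) := fun y hy s => by
    rw [← iterate_shiftMap_apply, ← iterate_shiftMap_apply, hy]
  intro y hy y' hy' hyy'
  apply Subtype.ext
  funext j
  induction j using Nat.strong_induction_on with
  | _ j ih =>
    rcases lt_or_ge j n with hj | hj
    · exact congrFun hyy' ⟨j, hj⟩
    · obtain ⟨s, rfl⟩ := Nat.exists_eq_add_of_le' hj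
      rw [hperiod y hy, hperiod y' hy']
      exact ih _ (by omega)

lemma countable_setOf_not_injective_iterate :
    {y : MarkovShift B | ¬ Injective fun n => (shiftMap B)^[n] y}.Countable := by
  refine (Set.countable_iUnion fun m => Set.countable_iUnion fun n => Set.countable_iUnion
    fun hmn : m < n => (finite_setOf_iterate_eq (B := B) hmn).countable).mono ?_
  intro y hy
  obtain ⟨a, b, hab, hne⟩ := not_injective_iff.1 hy
  simp only [Set.mem_iUnion, Set.mem_ofPred_eq]
  rcases hne.lt_or_gt with h | h
  exacts [⟨a, b, h, hab⟩, ⟨b, a, h, hab.symm⟩]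

/-- Baire category: the eventually periodic points are countably many and none of them is
isolated. -/
theorem dense_setOf_injective_iterate (hB : IsIrreducibleMatrix B)
    (hnp : ¬ IsPermutationMatrix B) :
    Dense {y : MarkovShift B | Injective fun n => (shiftMap B)^[n] y} := by
  simpa only [← Set.compl_iUnion₂, Set.biUnion_of_singleton, Set.compl_ofPred, not_not] using
    dense_biInter_of_isOpen (fun y _ => isOpen_compl_singleton)
      countable_setOf_not_injective_iterate
      (fun y _ => dense_compl_singleton_iff_not_open.2 (not_isOpen_singleton hB hnp y))

end MarkovShift

attribute [fun_prop] FullGroupElt.cont_k FullGroupElt.cont_l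

theorem PhiH_dA_eq_dB_add_coboundary_general {N M : ℕ}
    (A : Fin N → Fin N → Bool) (B : Fin M → Fin M → Bool)
    (hirrB : IsIrreducibleMatrix B) (hnpB : ¬ IsPermutationMatrix B)
    (h : MarkovShift A ≃ₜ MarkovShift B)
    (k₁ l₁ : MarkovShift A → ℕ)
    (horb₁ : ∀ x, (shiftMap B)^[k₁ x] (h (shiftMap A x)) = (shiftMap B)^[l₁ x] (h x))
    (k₂ l₂ : MarkovShift B → ℕ)
    (horb₂ : ∀ y, (shiftMap A)^[k₂ y] (h.symm (shiftMap B y)) =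
      (shiftMap A)^[l₂ y] (h.symm y))
    (b₁ : MarkovShift A → ℤ)
    (hc₁ : ∀ x, (l₁ x : ℤ) - (k₁ x : ℤ) = 1 + b₁ x - b₁ (shiftMap A x))
    (b₂ : MarkovShift B → ℤ) (hb₂ : Continuous b₂)
    (hc₂ : ∀ y, (l₂ y : ℤ) - (k₂ y : ℤ) = 1 + b₂ y - b₂ (shiftMap B y)) :
    ∀ (φ : FullGroupElt (shiftMap B)) (ψ : FullGroupElt (shiftMap A)),
      (∀ x, ψ.toHomeo x = h.symm (φ.toHomeo (h x))) →
      ∀ y, ((ψ.l (h.symm y) : ℤ) - (ψ.k (h.symm y) : ℤ)) =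
        (((φ.l y : ℤ) - (φ.k y : ℤ)) + (b₂ y - b₂ (φ.toHomeo y))) := by
  intro φ ψ hconj
  refine congrFun (Continuous.ext_on (MarkovShift.dense_setOf_injective_iterate hirrB hnpB)
    (by fun_prop) (by fun_prop) fun y hy => ?_)
  set x := h.symm y
  have hψx : ψ.toHomeo x = h.symm (φ.toHomeo y) := by simp [x, hconj]
  have hψlag := (OrbitLag.of_iterate_eq (ψ.orbit x)).map horb₁ hc₁
  have hφlag := ((OrbitLag.of_iterate_eq (φ.orbit y)).map horb₂ hc₂).map horb₁ hc₁
  rw [hψx, h.apply_symm_apply, h.apply_symm_apply] at hψlag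
  simp only [h.apply_symm_apply] at hφlag
  linarith [hψlag.unique hy hφlag]

/-- if `h` is a continuous orbit equivalence whose cocycle functions satisfy
`c₁ = 1 + b₁ − b₁∘σ_A` and `c₂ = 1 + b₂ − b₂∘σ_B` (strong continuous orbit equivalence),
then `Φ_h(d^A)(y,φ) = d^B(y,φ) + b₂(y) − b₂(φ(y))` for all `(y,φ) ∈ X_B × Γ_B`; hence
`Φ_h([d^A]) = [d^B]` in `H¹(Γ_B, X_B; ℤ)`. -/
theorem PhiH_dA_eq_dB_add_coboundary {N M : ℕ}
    (A : Fin N → Fin N → Bool) (B : Fin M → Fin M → Bool)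
    (hirrA : IsIrreducibleMatrix A) (hnpA : ¬ IsPermutationMatrix A)
    (hirrB : IsIrreducibleMatrix B) (hnpB : ¬ IsPermutationMatrix B)
    (h : MarkovShift A ≃ₜ MarkovShift B)
    (k₁ l₁ : MarkovShift A → ℕ) (hk₁ : Continuous k₁) (hl₁ : Continuous l₁)
    (horb₁ : ∀ x, (shiftMap B)^[k₁ x] (h (shiftMap A x)) = (shiftMap B)^[l₁ x] (h x))
    (k₂ l₂ : MarkovShift B → ℕ) (hk₂ : Continuous k₂) (hl₂ : Continuous l₂)
    (horb₂ : ∀ y, (shiftMap A)^[k₂ y] (h.symm (shiftMap B y)) =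
      (shiftMap A)^[l₂ y] (h.symm y))
    (b₁ : MarkovShift A → ℤ) (hb₁ : Continuous b₁)
    (hc₁ : ∀ x, (l₁ x : ℤ) - (k₁ x : ℤ) = 1 + b₁ x - b₁ (shiftMap A x))
    (b₂ : MarkovShift B → ℤ) (hb₂ : Continuous b₂)
    (hc₂ : ∀ y, (l₂ y : ℤ) - (k₂ y : ℤ) = 1 + b₂ y - b₂ (shiftMap B y)) :
    ∀ (φ : FullGroupElt (shiftMap B)) (ψ : FullGroupElt (shiftMap A)),
      (∀ x, ψ.toHomeo x = h.symm (φ.toHomeo (h x))) →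
      ∀ y, ((ψ.l (h.symm y) : ℤ) - (ψ.k (h.symm y) : ℤ)) =
        (((φ.l y : ℤ) - (φ.k y : ℤ)) + (b₂ y - b₂ (φ.toHomeo y))) :=
  PhiH_dA_eq_dB_add_coboundary_general A B hirrB hnpB h k₁ l₁ horb₁ k₂ l₂ horb₂ b₁ hc₁ b₂ hb₂ hc₂
end

section
/- Suppose h : X_A → X_B gives a continuous orbit equivalence and there exists τ ∈ Γ_A with c_1 = 1_A − d_τ + d_τ∘σ_A (Γ-strong continuous orbit equivalence). Then, writing ξ_h(τ) = h∘τ∘h^{-1}, the identities d_τ∘h^{-1} = d_{ξ_h(τ)}∘ξ_h(τ^{-1}) = −d_{ξ_h(τ^{-1})} hold, and the second cocycle function satisfies c_2 = 1_B − d_{ξ_h(τ^{-1})} + d_{ξ_h(τ^{-1})}∘σ_B. -/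
/-- `d_τ = l_τ − k_τ`. -/
def dFun {X : Type*} [TopologicalSpace X] {σ : X → X} (τ : FullGroupElt σ) (x : X) : ℤ :=
  (τ.l x : ℤ) - (τ.k x : ℤ)

namespace GSC


/-- eventually periodic -/

def EvP {X : Type*} (σ : X → X) (x : X) : Prop := ∃ m n : ℕ, m ≠ n ∧ σ^[m] x = σ^[n] x

lemma nep_iter_eq {X : Type*} {σ : X → X} {y : X} (hy : ¬ EvP σ y) {p q : ℕ}
    (h : σ^[p] y = σ^[q] y) : p = q := by
  by_contra hne; exact hy ⟨p, q, hne, h⟩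

lemma nep_shift {X : Type*} {σ : X → X} {y : X} (hy : ¬ EvP σ y) : ¬ EvP σ (σ y) := by
  rintro ⟨m, n, hmn, he⟩
  refine hy ⟨m+1, n+1, by omega, ?_⟩
  rw [Function.iterate_succ_apply, Function.iterate_succ_apply]
  exact he

lemma iterate_comm {X : Type*} (σ : X → X) (a b : ℕ) (z : X) :
    σ^[a] (σ^[b] z) = σ^[b] (σ^[a] z) := by
  rw [← Function.iterate_add_apply, Nat.add_comm, Function.iterate_add_apply]

lemma mixRel {X : Type*} {σ : X → X} {u y : X} (hy : ¬EvP σ y) {p q p' q' : ℕ}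
    (h1 : σ^[p] u = σ^[q] y) (h2 : σ^[p'] y = σ^[q'] u) : p + p' = q + q' := by
  apply nep_iter_eq hy
  calc σ^[p+p'] y = σ^[p] (σ^[p'] y) := Function.iterate_add_apply σ p p' y
  _ = σ^[p] (σ^[q'] u) := by rw [h2]
  _ = σ^[q'] (σ^[p] u) := iterate_comm σ p q' u
  _ = σ^[q'] (σ^[q] y) := by rw [h1]
  _ = σ^[q+q'] y := by rw [← Function.iterate_add_apply, Nat.add_comm]

lemma iter_orbit {Xa Xb : Type*} (σa : Xa → Xa) (σb : Xb → Xb) (h : Xa → Xb) (k l : Xa → ℕ)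
    (horb : ∀ x, σb^[k x] (h (σa x)) = σb^[l x] (h x)) (n : ℕ) (x : Xa) :
    σb^[∑ i ∈ Finset.range n, k (σa^[i] x)] (h (σa^[n] x)) =
      σb^[∑ i ∈ Finset.range n, l (σa^[i] x)] (h x) := by
  induction n with
  | zero => simp
  | succ n ih =>
    rw [Finset.sum_range_succ, Finset.sum_range_succ]
    calc σb^[(∑ i ∈ Finset.range n, k (σa^[i] x)) + k (σa^[n] x)] (h (σa^[n+1] x))
        = σb^[∑ i ∈ Finset.range n, k (σa^[i] x)] (σb^[k (σa^[n] x)] (h (σa (σa^[n] x)))) := by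
          rw [Function.iterate_add_apply, Function.iterate_succ_apply']
      _ = σb^[∑ i ∈ Finset.range n, k (σa^[i] x)] (σb^[l (σa^[n] x)] (h (σa^[n] x))) := by
          rw [horb]
      _ = σb^[l (σa^[n] x)] (σb^[∑ i ∈ Finset.range n, k (σa^[i] x)] (h (σa^[n] x))) :=
          iterate_comm σb _ _ _
      _ = σb^[l (σa^[n] x)] (σb^[∑ i ∈ Finset.range n, l (σa^[i] x)] (h x)) := by rw [ih]
      _ = σb^[(∑ i ∈ Finset.range n, l (σa^[i] x)) + l (σa^[n] x)] (h x) := by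
          rw [← Function.iterate_add_apply, Nat.add_comm]

lemma pairRel {Xa Xb : Type*} (σa : Xa → Xa) (σb : Xb → Xb) (h : Xa → Xb) (k l : Xa → ℕ)
    (horb : ∀ x, σb^[k x] (h (σa x)) = σb^[l x] (h x)) {x₁ x₂ : Xa} {a b : ℕ}
    (hab : σa^[a] x₁ = σa^[b] x₂) :
    σb^[(∑ i ∈ Finset.range b, k (σa^[i] x₂)) + ∑ i ∈ Finset.range a, l (σa^[i] x₁)] (h x₁) =
    σb^[(∑ i ∈ Finset.range a, k (σa^[i] x₁)) + ∑ i ∈ Finset.range b, l (σa^[i] x₂)] (h x₂) := by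
  have e1 := iter_orbit σa σb h k l horb a x₁
  have e2 := iter_orbit σa σb h k l horb b x₂
  rw [← hab] at e2
  calc σb^[(∑ i ∈ Finset.range b, k (σa^[i] x₂)) + ∑ i ∈ Finset.range a, l (σa^[i] x₁)] (h x₁)
      = σb^[∑ i ∈ Finset.range b, k (σa^[i] x₂)] (σb^[∑ i ∈ Finset.range a, l (σa^[i] x₁)] (h x₁)) :=
        Function.iterate_add_apply σb _ _ _
    _ = σb^[∑ i ∈ Finset.range b, k (σa^[i] x₂)] (σb^[∑ i ∈ Finset.range a, k (σa^[i] x₁)] (h (σa^[a] x₁))) := by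
        rw [e1]
    _ = σb^[∑ i ∈ Finset.range a, k (σa^[i] x₁)] (σb^[∑ i ∈ Finset.range b, k (σa^[i] x₂)] (h (σa^[a] x₁))) :=
        iterate_comm σb _ _ _
    _ = σb^[∑ i ∈ Finset.range a, k (σa^[i] x₁)] (σb^[∑ i ∈ Finset.range b, l (σa^[i] x₂)] (h x₂)) := by
        rw [e2]
    _ = σb^[(∑ i ∈ Finset.range a, k (σa^[i] x₁)) + ∑ i ∈ Finset.range b, l (σa^[i] x₂)] (h x₂) :=
        (Function.iterate_add_apply σb _ _ _).symm

lemma shift_iter_coord {N : ℕ} {A : Fin N → Fin N → Bool} (x : MarkovShift A) (k t : ℕ) :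
    ((shiftMap A)^[k] x).1 t = x.1 (t + k) := by
  induction k generalizing x with
  | zero => rfl
  | succ k ih =>
    rw [Function.iterate_succ_apply, ih]
    rfl

lemma continuous_shiftMap {N : ℕ} (A : Fin N → Fin N → Bool) : Continuous (shiftMap A) := by
  apply Continuous.subtype_mk
  exact continuous_pi fun n => (continuous_apply (n+1)).comp continuous_subtype_val

lemma countable_evp {M : ℕ} (B : Fin M → Fin M → Bool) :
    {y : MarkovShift B | EvP (shiftMap B) y}.Countable := by
  have hsub : {y : MarkovShift B | EvP (shiftMap B) y} ⊆
      ⋃ p : ℕ × ℕ, {y : MarkovShift B | p.1 ≠ p.2 ∧ (shiftMap B)^[p.1] y = (shiftMap B)^[p.2] y} := by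
    rintro y ⟨m, n, hmn, he⟩
    exact Set.mem_iUnion.2 ⟨(m, n), hmn, he⟩
  refine Set.Countable.mono hsub (Set.countable_iUnion fun p => ?_)
  rw [← Set.countable_coe_iff]
  have hinj : Function.Injective
      (fun (y : {y : MarkovShift B | p.1 ≠ p.2 ∧ (shiftMap B)^[p.1] y = (shiftMap B)^[p.2] y})
        (t : Fin (max p.1 p.2)) => y.1.1 t) := by
    rintro ⟨y, hy1, hy2⟩ ⟨y', hy1', hy2'⟩ hpre
    simp only at hpre
    have rel : ∀ (w : MarkovShift B), (shiftMap B)^[p.1] w = (shiftMap B)^[p.2] w →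
        ∀ s, w.1 (s + p.1) = w.1 (s + p.2) := by
      intro w hw s
      have := congrArg (fun v : MarkovShift B => v.1 s) hw
      simpa [shift_iter_coord] using this
    have h1 := rel _ hy2
    have h2 := rel _ hy2'
    obtain ⟨m, n, hmlt, hmax, hry, hry'⟩ :
        ∃ m n, m < n ∧ max p.1 p.2 = n ∧ (∀ s, y.1 (s+n) = y.1 (s+m)) ∧
          (∀ s, y'.1 (s+n) = y'.1 (s+m)) := by
      rcases lt_or_gt_of_ne hy1 with hlt | hgt
      · exact ⟨p.1, p.2, hlt, by omega, fun s => (h1 s).symm, fun s => (h2 s).symm⟩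
      · exact ⟨p.2, p.1, hgt, by omega, fun s => h1 s, fun s => h2 s⟩
    apply Subtype.ext
    apply Subtype.ext
    funext t
    induction t using Nat.strong_induction_on with
    | _ t ih =>
      by_cases ht : t < n
      · exact congrFun hpre ⟨t, by omega⟩
      · push_neg at ht
        have e1 : y.1 t = y.1 (t - n + m) := by
          have := hry (t - n); rwa [show t - n + n = t by omega] at this
        have e2 : y'.1 t = y'.1 (t - n + m) := by
          have := hry' (t - n); rwa [show t - n + n = t by omega] at this
        rw [e1, e2, ih (t - n + m) (by omega)]
  exact hinj.countable

lemma exists_nep_of_injective {α : Type*} {s : Set α} (hs : s.Countable)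
    (F : (ℕ → Bool) → α) (hF : Function.Injective F) : ∃ g, F g ∉ s := by
  by_contra hcon
  push_neg at hcon
  have hc : Countable (ℕ → Bool) := by
    have := hs.to_subtype
    exact Function.Injective.countable
      (f := fun g => (⟨F g, hcon g⟩ : s)) (fun a b hab => hF (congrArg Subtype.val hab))
  obtain ⟨f, hf⟩ := exists_injective_nat (ℕ → Bool)
  classical
  have hg : Function.Injective (fun (S : Set ℕ) (n : ℕ) => decide (n ∈ S)) := by
    intro S T hST
    ext n
    have := congrFun hST n
    simpa [decide_eq_decide] using this
  exact Function.cantor_injective _ (hf.comp hg)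

lemma exists_two_successors {M : ℕ} (B : Fin M → Fin M → Bool) (hirr : IsIrreducibleMatrix B)
    (hnp : ¬ IsPermutationMatrix B) :
    ∃ i j₁ j₂ : Fin M, j₁ ≠ j₂ ∧ B i j₁ = true ∧ B i j₂ = true := by
  by_contra hcon
  push_neg at hcon
  apply hnp
  have hrow1 : ∀ i, ∃! j, B i j = true := by
    intro i
    obtain ⟨n, hn, p, hp0, hpn, hpe⟩ := hirr i i
    have hj : B i (p 1) = true := by rw [← hp0]; exact hpe 0 hn
    refine ⟨p 1, hj, fun j' hj' => ?_⟩
    by_contra hne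
    exact absurd hj (hcon i j' (p 1) hne hj')
  choose f hf hfu using hrow1
  have hsurj : Function.Surjective f := by
    intro j
    obtain ⟨n, hn, p, hp0, hpn, hpe⟩ := hirr j j
    have : B (p (n-1)) j = true := by
      have := hpe (n-1) (by omega)
      rwa [show n - 1 + 1 = n by omega, hpn] at this
    exact ⟨p (n-1), (hfu _ _ this).symm⟩
  have hinj : Function.Injective f := Finite.injective_iff_surjective.mpr hsurj
  refine ⟨fun i => ⟨f i, hf i, hfu i⟩, fun j => ?_⟩
  obtain ⟨i, hi⟩ := hsurj j
  refine ⟨i, by rw [← hi]; exact hf i, fun i' hi' => ?_⟩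
  exact hinj (by rw [hi, ← hfu i' j hi'])

def catFn {α : Type*} (K : ℕ) (f g : ℕ → α) : ℕ → α := fun t => if t < K then f t else g (t - K)

lemma catFn_lt {α : Type*} {K t : ℕ} (f g : ℕ → α) (h : t < K) : catFn K f g t = f t :=
  if_pos h

lemma catFn_ge {α : Type*} {K t : ℕ} (f g : ℕ → α) (h : K ≤ t) : catFn K f g t = g (t - K) :=
  if_neg (by omega)

lemma catFn_adm {M : ℕ} (B : Fin M → Fin M → Bool) (K : ℕ) (f g : ℕ → Fin M)
    (hf : ∀ t, t + 1 < K → B (f t) (f (t+1)) = true)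
    (hlink : 1 ≤ K → B (f (K-1)) (g 0) = true)
    (hg : ∀ t, B (g t) (g (t+1)) = true) :
    ∀ t, B (catFn K f g t) (catFn K f g (t+1)) = true := by
  intro t
  rcases lt_trichotomy (t+1) K with hc|hc|hc
  · rw [catFn_lt f g (by omega), catFn_lt f g hc]; exact hf t hc
  · rw [catFn_lt f g (by omega), catFn_ge f g (by omega), show t + 1 - K = 0 by omega,
      show t = K - 1 by omega]
    exact hlink (by omega)
  · rw [catFn_ge f g (by omega), catFn_ge f g (by omega),
      show t + 1 - K = (t - K) + 1 by omega]
    exact hg _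

lemma exists_loop {M : ℕ} (B : Fin M → Fin M → Bool) (hirr : IsIrreducibleMatrix B)
    {i j : Fin M} (hij : B i j = true) :
    ∃ m : ℕ, 2 ≤ m ∧ ∃ c : ℕ → Fin M, c 0 = i ∧ c 1 = j ∧
      (∀ t, B (c t) (c (t+1)) = true) ∧ (∀ t, c (t+m) = c t) := by
  obtain ⟨L, hL, p, hp0, hpL, hpe⟩ := hirr j i
  refine ⟨L + 1, by omega, fun t => if t % (L+1) = 0 then i else p (t % (L+1) - 1), ?_, ?_, ?_, ?_⟩
  · simp
  · have h1 : 1 % (L+1) = 1 := Nat.mod_eq_of_lt (by omega)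
    simp [h1, hp0]
  · intro t
    beta_reduce
    have hr : t % (L+1) < L + 1 := Nat.mod_lt _ (by omega)
    have h1L : 1 % (L+1) = 1 := Nat.mod_eq_of_lt (by omega)
    have hsucc : (t+1) % (L+1) = (t % (L+1) + 1) % (L+1) := by
      rw [Nat.add_mod, h1L]
    set r := t % (L+1) with hrdef
    rcases Nat.lt_or_ge (r + 1) (L + 1) with hc | hc
    · have : (t+1) % (L+1) = r + 1 := by rw [hsucc]; exact Nat.mod_eq_of_lt hc
      rw [this]
      by_cases hr0 : r = 0
      · simp only [hr0, if_pos rfl, if_neg (by omega : ¬ (0:ℕ) + 1 = 0)]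
        simpa [hp0] using hij
      · rw [if_neg hr0, if_neg (by omega)]
        have := hpe (r - 1) (by omega)
        rwa [show r - 1 + 1 = r + 1 - 1 by omega] at this
    · have hreq : r = L := by omega
      have : (t+1) % (L+1) = 0 := by
        rw [hsucc, hreq]; simp
      rw [this, if_pos rfl]
      by_cases hr0 : r = 0
      · rw [if_pos hr0]
        have hL0 : L = 0 := by omega
        omega
      · rw [if_neg hr0]
        have := hpe (r - 1) (by omega)
        rwa [show r - 1 + 1 = L by omega, hpL] at this
  · intro t
    beta_reduce
    rw [Nat.add_mod_right]

def blockFn {M : ℕ} (c : Bool → ℕ → Fin M) (nb : ℕ) (s : ℕ → Bool) : ℕ → Fin M :=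
  fun t => c (s (t / nb)) (t % nb)

lemma blockFn_val {M : ℕ} (c : Bool → ℕ → Fin M) {nb : ℕ} (hnb : 0 < nb) (s : ℕ → Bool)
    {r : ℕ} (k : ℕ) (hr : r < nb) : blockFn c nb s (r + nb * k) = c (s k) r := by
  show c (s ((r + nb * k) / nb)) ((r + nb * k) % nb) = c (s k) r
  rw [Nat.add_mul_div_left _ _ hnb, Nat.div_eq_of_lt hr, Nat.zero_add,
    Nat.add_mul_mod_self_left, Nat.mod_eq_of_lt hr]

lemma blockFn_adm {M : ℕ} (B : Fin M → Fin M → Bool) (c : Bool → ℕ → Fin M) {nb : ℕ}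
    {i : Fin M} (hnb : 0 < nb) (hce : ∀ b t, B (c b t) (c b (t+1)) = true)
    (hc0 : ∀ b, c b 0 = i) (hcn : ∀ b, c b nb = i) (s : ℕ → Bool) :
    ∀ t, B (blockFn c nb s t) (blockFn c nb s (t+1)) = true := by
  intro t
  obtain ⟨q, r, hr, ht⟩ : ∃ q r, r < nb ∧ t = r + nb * q := by
    refine ⟨t / nb, t % nb, Nat.mod_lt _ hnb, ?_⟩
    rw [Nat.add_comm]
    exact (Nat.div_add_mod t nb).symm
  have e1 : blockFn c nb s t = c (s q) r := by rw [ht]; exact blockFn_val c hnb s q hr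
  rcases Nat.lt_or_ge (r+1) nb with hc | hc
  · have e2 : blockFn c nb s (t+1) = c (s q) (r+1) := by
      rw [show t + 1 = (r+1) + nb * q by rw [ht]; ring]
      exact blockFn_val c hnb s q hc
    rw [e1, e2]; exact hce _ _
  · have hreq : r + 1 = nb := by omega
    have e2 : blockFn c nb s (t+1) = c (s (q+1)) 0 := by
      rw [show t + 1 = 0 + nb * (q+1) by rw [ht, ← hreq]; ring]
      exact blockFn_val c hnb s (q+1) hnb
    rw [e1, e2, hc0, ← hcn (s q), ← hreq]
    exact hce _ _

lemma exists_injection_into_cylinder {M : ℕ} (B : Fin M → Fin M → Bool)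
    (hirr : IsIrreducibleMatrix B) (hnp : ¬ IsPermutationMatrix B)
    (y : MarkovShift B) (n : ℕ) :
    ∃ F : (ℕ → Bool) → MarkovShift B, Function.Injective F ∧
      ∀ s, ∀ t < n, (F s).1 t = y.1 t := by
  obtain ⟨i, j₁, j₂, hjne, hj1, hj2⟩ := exists_two_successors B hirr hnp
  obtain ⟨K, hKdef⟩ : ∃ K, K = max n 1 := ⟨_, rfl⟩
  have hK1 : 1 ≤ K := by omega
  have hKn : n ≤ K := by omega
  obtain ⟨Lq, hLq, q, hq0, hqL, hqe⟩ := hirr (y.1 (K-1)) i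
  obtain ⟨m₁, hm₁, d₁, hd₁0, hd₁1, hd₁e, hd₁p⟩ := exists_loop B hirr hj1
  obtain ⟨m₂, hm₂, d₂, hd₂0, hd₂1, hd₂e, hd₂p⟩ := exists_loop B hirr hj2
  obtain ⟨nb, hnbdef⟩ : ∃ nb, nb = m₁ * m₂ := ⟨_, rfl⟩
  have hnb2 : 2 ≤ nb := by
    have := Nat.mul_le_mul hm₁ hm₂
    omega
  have hnb0 : 0 < nb := by omega
  have hper : ∀ (c : ℕ → Fin M) m d, (∀ t, c (t+m) = c t) → ∀ t, c (t + m*d) = c t := by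
    intro c m d hc
    induction d with
    | zero => simp
    | succ dd ih =>
      intro t
      rw [show t + m * (dd+1) = (t + m*dd) + m by ring, hc, ih]
  obtain ⟨c, hcdef⟩ : ∃ c : Bool → ℕ → Fin M, c = fun b => cond b d₁ d₂ := ⟨_, rfl⟩
  have hc0 : ∀ b, c b 0 = i := by intro b; cases b <;> simp [hcdef, hd₁0, hd₂0]
  have hc1t : c true 1 = j₁ := by simp [hcdef, hd₁1]
  have hc1f : c false 1 = j₂ := by simp [hcdef, hd₂1]
  have hce : ∀ b t, B (c b t) (c b (t+1)) = true := by
    intro b t; cases b <;> simp [hcdef] <;> [exact hd₂e t; exact hd₁e t]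
  have hcn : ∀ b, c b nb = i := by
    intro b
    cases b
    · have := hper d₂ m₂ m₁ hd₂p 0
      simp only [Nat.zero_add] at this
      simp [hcdef]
      rw [show nb = m₂ * m₁ by rw [hnbdef]; ring, this, hd₂0]
    · have := hper d₁ m₁ m₂ hd₁p 0
      simp only [Nat.zero_add] at this
      simp [hcdef]
      rw [hnbdef, this, hd₁0]
  obtain ⟨xf, hxfdef⟩ : ∃ xf : (ℕ → Bool) → ℕ → Fin M,
      xf = fun s => catFn (K-1) y.1 (catFn Lq q (blockFn c nb s)) := ⟨_, rfl⟩
  have hG0 : ∀ s, catFn Lq q (blockFn c nb s) 0 = y.1 (K-1) := by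
    intro s; rw [catFn_lt _ _ hLq, hq0]
  have hGadm : ∀ s t, B (catFn Lq q (blockFn c nb s) t) (catFn Lq q (blockFn c nb s) (t+1)) = true := by
    intro s
    apply catFn_adm
    · intro t ht; exact hqe t (by omega)
    · intro _
      have hB0 : blockFn c nb s 0 = i := by
        show c (s (0 / nb)) (0 % nb) = i
        simp [hc0]
      rw [hB0, ← hqL]
      have := hqe (Lq - 1) (by omega)
      rwa [show Lq - 1 + 1 = Lq by omega] at this
    · exact blockFn_adm B c hnb0 hce hc0 hcn s
  have hadm : ∀ s t, B (xf s t) (xf s (t+1)) = true := by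
    intro s
    rw [hxfdef]
    apply catFn_adm
    · intro t ht; exact y.2 t
    · intro hK2
      rw [hG0 s]
      have := y.2 (K-2)
      rwa [show K - 2 + 1 = K - 1 by omega] at this
    · exact hGadm s
  have hpre : ∀ s, ∀ t < n, xf s t = y.1 t := by
    intro s t ht
    rw [hxfdef]
    rcases Nat.lt_or_ge t (K-1) with hc | hc
    · exact catFn_lt _ _ hc
    · have htK : t = K - 1 := by omega
      beta_reduce
      rw [catFn_ge _ _ hc, htK, Nat.sub_self, hG0 s]
  have hval : ∀ s k, xf s ((K-1) + (Lq + (1 + nb * k))) = c (s k) 1 := by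
    intro s k
    rw [hxfdef]
    beta_reduce
    rw [catFn_ge _ _ (by omega), Nat.add_sub_cancel_left, catFn_ge _ _ (by omega),
      Nat.add_sub_cancel_left]
    exact blockFn_val c hnb0 s k (by omega)
  refine ⟨fun s => ⟨xf s, hadm s⟩, ?_, ?_⟩
  · intro s s' hss
    funext k
    have hv := congrArg (fun z : MarkovShift B => z.1 ((K-1) + (Lq + (1 + nb * k)))) hss
    simp only at hv
    rw [hval s k, hval s' k] at hv
    cases hsk : s k <;> cases hsk' : s' k
    · rfl
    · exfalso; rw [hsk, hsk', hc1f, hc1t] at hv; exact hjne hv.symm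
    · exfalso; rw [hsk, hsk', hc1t, hc1f] at hv; exact hjne hv
    · rfl
  · intro s t ht
    exact hpre s t ht

lemma dense_nep {M : ℕ} (B : Fin M → Fin M → Bool) (hirr : IsIrreducibleMatrix B)
    (hnp : ¬ IsPermutationMatrix B) :
    Dense {y : MarkovShift B | ¬ EvP (shiftMap B) y} := by
  rw [dense_iff_inter_open]
  rintro U hU ⟨y, hyU⟩
  obtain ⟨V, hV, hUV⟩ := isOpen_induced_iff.mp hU
  have hyV : y.1 ∈ V := by rw [← hUV] at hyU; exact hyU
  obtain ⟨I, u, hIu, hpi⟩ := isOpen_pi_iff.mp hV y.1 hyV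
  obtain ⟨F, hFinj, hFpre⟩ := exists_injection_into_cylinder B hirr hnp y (I.sup id + 1)
  obtain ⟨s, hs⟩ := exists_nep_of_injective (countable_evp B) F hFinj
  refine ⟨F s, ?_, hs⟩
  rw [← hUV]
  apply hpi
  intro a ha
  have haI : a ∈ I := ha
  have hv : (F s).1 a = y.1 a := by
    apply hFpre s a
    have := Finset.le_sup (f := id) haI
    simp only [id] at this
    omega
  rw [hv]
  exact (hIu a haI).2

lemma continuous_dFun {X : Type*} [TopologicalSpace X] {σ : X → X} (τ : FullGroupElt σ) :
    Continuous (dFun τ) := by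
  have hcast : Continuous (fun m : ℕ => (m : ℤ)) := continuous_of_discreteTopology
  exact (hcast.comp τ.cont_l).sub (hcast.comp τ.cont_k)

lemma diff_sum {N : ℕ} {A : Fin N → Fin N → Bool} (k l : MarkovShift A → ℕ)
    (τ : FullGroupElt (shiftMap A))
    (hc : ∀ x, (l x : ℤ) - k x = 1 - dFun τ x + dFun τ (shiftMap A x)) (n : ℕ)
    (x : MarkovShift A) :
    ((∑ i ∈ Finset.range n, l ((shiftMap A)^[i] x) : ℕ) : ℤ) -
      ((∑ i ∈ Finset.range n, k ((shiftMap A)^[i] x) : ℕ) : ℤ) =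
      n - dFun τ x + dFun τ ((shiftMap A)^[n] x) := by
  induction n with
  | zero => simp
  | succ n ih =>
    rw [Finset.sum_range_succ, Finset.sum_range_succ, Function.iterate_succ_apply']
    have := hc ((shiftMap A)^[n] x)
    push_cast
    push_cast at ih
    linarith

end GSC

open GSC in
/-- if `h` is a continuous orbit equivalence with `c₁ = 1 − d_τ + d_τ∘σ_A`
for some `τ ∈ Γ_A` (Γ-strong continuous orbit equivalence), then, with
`ξ_h(τ) = h∘τ∘h⁻¹`, the identities `d_τ∘h⁻¹ = d_{ξ_h(τ)}∘ξ_h(τ⁻¹) = −d_{ξ_h(τ⁻¹)}` hold,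
and `c₂ = 1 − d_{ξ_h(τ⁻¹)} + d_{ξ_h(τ⁻¹)}∘σ_B`. -/
theorem gammaScoe_second_cocycle {N M : ℕ}
    (A : Fin N → Fin N → Bool) (B : Fin M → Fin M → Bool)
    (hirrA : IsIrreducibleMatrix A) (hnpA : ¬ IsPermutationMatrix A)
    (hirrB : IsIrreducibleMatrix B) (hnpB : ¬ IsPermutationMatrix B)
    (h : MarkovShift A ≃ₜ MarkovShift B)
    (k₁ l₁ : MarkovShift A → ℕ) (hk₁ : Continuous k₁) (hl₁ : Continuous l₁)
    (horb₁ : ∀ x, (shiftMap B)^[k₁ x] (h (shiftMap A x)) = (shiftMap B)^[l₁ x] (h x))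
    (k₂ l₂ : MarkovShift B → ℕ) (hk₂ : Continuous k₂) (hl₂ : Continuous l₂)
    (horb₂ : ∀ y, (shiftMap A)^[k₂ y] (h.symm (shiftMap B y)) =
      (shiftMap A)^[l₂ y] (h.symm y))
    (τ : FullGroupElt (shiftMap A))
    (hc₁ : ∀ x, (l₁ x : ℤ) - (k₁ x : ℤ) = 1 - dFun τ x + dFun τ (shiftMap A x)) :
    ∀ (φ ψ : FullGroupElt (shiftMap B)),
      (∀ y, φ.toHomeo y = h (τ.toHomeo.symm (h.symm y))) →
      (∀ y, ψ.toHomeo y = h (τ.toHomeo (h.symm y))) →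
      (∀ y, dFun τ (h.symm y) = dFun ψ (φ.toHomeo y)) ∧
      (∀ y, dFun τ (h.symm y) = - dFun φ y) ∧
      (∀ y, (l₂ y : ℤ) - (k₂ y : ℤ) = 1 - dFun φ y + dFun φ (shiftMap B y)) := by
  intro φ ψ hφ hψ
  have hDense := dense_nep B hirrB hnpB
  have hdiff := diff_sum k₁ l₁ τ hc₁
  -- Key pointwise identity 2
  have key2 : ∀ y, ¬ EvP (shiftMap B) y → dFun τ (h.symm y) = - dFun φ y := by
    intro y hy
    have hzx := τ.orbit (τ.toHomeo.symm (h.symm y))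
    rw [τ.toHomeo.apply_symm_apply] at hzx
    have e2 := pairRel (shiftMap A) (shiftMap B) (⇑h) k₁ l₁ horb₁ hzx
    rw [h.apply_symm_apply] at e2
    have e1 := φ.orbit y
    rw [hφ y] at e1
    have hsum := mixRel hy e1 e2
    have hsumZ := congrArg (Nat.cast : ℕ → ℤ) hsum
    push_cast at hsumZ
    have d1 := hdiff (τ.k (τ.toHomeo.symm (h.symm y))) (h.symm y)
    rw [hzx] at d1
    have d2 := hdiff (τ.l (τ.toHomeo.symm (h.symm y))) (τ.toHomeo.symm (h.symm y))
    have hdz : dFun τ (τ.toHomeo.symm (h.symm y)) =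
        (τ.l (τ.toHomeo.symm (h.symm y)) : ℤ) - τ.k (τ.toHomeo.symm (h.symm y)) := rfl
    have hdφ : dFun φ y = (φ.l y : ℤ) - φ.k y := rfl
    push_cast at d1 d2
    linarith
  -- Key pointwise identity 1
  have key1 : ∀ y, ¬ EvP (shiftMap B) y → dFun τ (h.symm y) = dFun ψ (φ.toHomeo y) := by
    intro y hy
    rw [hφ y]
    have hzx := τ.orbit (τ.toHomeo.symm (h.symm y))
    rw [τ.toHomeo.apply_symm_apply] at hzx
    have e2 := pairRel (shiftMap A) (shiftMap B) (⇑h) k₁ l₁ horb₁ hzx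
    rw [h.apply_symm_apply] at e2
    have e3 := ψ.orbit (h (τ.toHomeo.symm (h.symm y)))
    rw [hψ (h (τ.toHomeo.symm (h.symm y))), h.symm_apply_apply, τ.toHomeo.apply_symm_apply,
      h.apply_symm_apply] at e3
    have hsum := mixRel hy e2.symm e3
    have hsumZ := congrArg (Nat.cast : ℕ → ℤ) hsum
    push_cast at hsumZ
    have d1 := hdiff (τ.k (τ.toHomeo.symm (h.symm y))) (h.symm y)
    rw [hzx] at d1
    have d2 := hdiff (τ.l (τ.toHomeo.symm (h.symm y))) (τ.toHomeo.symm (h.symm y))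
    have hdz : dFun τ (τ.toHomeo.symm (h.symm y)) =
        (τ.l (τ.toHomeo.symm (h.symm y)) : ℤ) - τ.k (τ.toHomeo.symm (h.symm y)) := rfl
    have hdψ : dFun ψ (h (τ.toHomeo.symm (h.symm y))) =
        (ψ.l (h (τ.toHomeo.symm (h.symm y))) : ℤ) - ψ.k (h (τ.toHomeo.symm (h.symm y))) := rfl
    push_cast at d1 d2
    linarith
  -- Key pointwise identity 3
  have key3 : ∀ y, ¬ EvP (shiftMap B) y →
      (l₂ y : ℤ) - k₂ y = 1 - dFun φ y + dFun φ (shiftMap B y) := by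
    intro y hy
    have horb := horb₂ y
    have e := pairRel (shiftMap A) (shiftMap B) (⇑h) k₁ l₁ horb₁ horb
    rw [h.apply_symm_apply, h.apply_symm_apply, ← Function.iterate_succ_apply] at e
    have hPQ := nep_iter_eq hy e
    have hPQZ := congrArg (Nat.cast : ℕ → ℤ) hPQ
    push_cast at hPQZ
    have d1 := hdiff (k₂ y) (h.symm (shiftMap B y))
    rw [horb] at d1
    have d2 := hdiff (l₂ y) (h.symm y)
    have hk2 := key2 y hy
    have hk2' := key2 (shiftMap B y) (nep_shift hy)
    push_cast at d1 d2
    linarith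
  have cast_cont : Continuous (fun m : ℕ => (m : ℤ)) := continuous_of_discreteTopology
  refine ⟨?_, ?_, ?_⟩
  · have heq := Continuous.ext_on hDense
      ((continuous_dFun τ).comp h.symm.continuous)
      ((continuous_dFun ψ).comp φ.toHomeo.continuous)
      (fun y hy => key1 y hy)
    exact fun y => congrFun heq y
  · have heq := Continuous.ext_on hDense
      ((continuous_dFun τ).comp h.symm.continuous)
      ((continuous_dFun φ).neg)
      (fun y hy => key2 y hy)
    exact fun y => congrFun heq y
  · have heq := Continuous.ext_on hDense
      ((cast_cont.comp hl₂).sub (cast_cont.comp hk₂))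
      ((continuous_const.sub (continuous_dFun φ)).add
        ((continuous_dFun φ).comp (continuous_shiftMap B)))
      (fun y hy => key3 y hy)
    exact fun y => congrFun heq y
end
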